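/- arXiv:1911.05416 — 3 statements merged into one kernel-verified Lean document; each statement's English description precedes it below -/
import Mathlib

section
/- Let φ be a 3-SAT formula with clauses C_1,…,C_m over variables x_1,…,x_n, and consider the cake-cutting instance constructed from φ as described. Let 0 ≤ ε ≤ 0.01. In every contiguous ε-envy-free allocation of this instance, every agent receives an interval of strictly positive value according to her own valuation. -/
/-- The agents of the cake-cutting instance built from a 3-SAT formula with `m` clauses
and `n` variables: clause agents `C i k`, variable agents `L j`, `R j`, the agents
`S 0, …, S (m+n-1)` and the agent `S₀'`. -/
inductive CakeAgent (m n : ℕ) : Type where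
  | cl : Fin m → Fin 3 → CakeAgent m n      -- clause agent C_i^k
  | lt : Fin n → CakeAgent m n              -- variable agent L_j
  | rt : Fin n → CakeAgent m n              -- variable agent R_j
  | sep : Fin (m + n) → CakeAgent m n       -- agents S_0, S_1, …, S_{m+n-1}
  | sep' : CakeAgent m n                    -- agent S_0'

/-- Indicator density of the interval `[s, t]` (a block of height 1). -/
noncomputable def blockInd (s t x : ℝ) : ℝ := if s ≤ x ∧ x ≤ t then 1 else 0

/-- Left endpoint of the Clause-Gadget of clause `i` (`0`-indexed). -/
def clauseStart {m : ℕ} (i : Fin m) : ℝ := 3 + 12 * (i : ℕ)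

/-- Left endpoint of the Variable-Gadget of variable `j` (`0`-indexed). -/
def varStart (m : ℕ) {n : ℕ} (j : Fin n) : ℝ := 3 + 12 * m + 7 * (j : ℕ)

/-- Left endpoint of the Isolating Interval `I_k` (with `I_0` the Initiation Interval). -/
def isoStart (m : ℕ) (k : ℕ) : ℝ :=
  if k = 0 then 0 else if k ≤ m then 12 * k else 12 * m + 7 * (k - m)

/-- The density of each agent of the instance built from the 3-SAT formula `φ`
(`φ i k = (j, pol)` means the `k`-th literal of clause `i` is `x_j` if `pol = true`
and `¬ x_j` if `pol = false`). All blocks have height 1. -/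
noncomputable def cakeDensity (m n : ℕ) (φ : Fin m → Fin 3 → Fin n × Bool) :
    CakeAgent m n → ℝ → ℝ
  | .cl i k => fun x =>
      blockInd (clauseStart i + (k : ℕ)) (clauseStart i + (k : ℕ) + 0.24) x +
      blockInd (clauseStart i + (k : ℕ) + 3) (clauseStart i + (k : ℕ) + 3.24) x +
      blockInd (clauseStart i + (k : ℕ) + 6) (clauseStart i + (k : ℕ) + 6.24) x +
      blockInd (varStart m (φ i k).1 + (if (φ i k).2 then 1.5 else 2.5) - 0.14)
               (varStart m (φ i k).1 + (if (φ i k).2 then 1.5 else 2.5) + 0.14) x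
  | .lt j => fun x => blockInd (varStart m j) (varStart m j + 1) x
  | .rt j => fun x => blockInd (varStart m j + 3) (varStart m j + 4) x
  | .sep k => fun x =>
      if k.val = 0 then
        blockInd (0.5 - 1/14) (0.5 + 1/14) x +
        blockInd (2.5 - 1/7) (2.5 + 1/7) x +
        blockInd (isoStart m 1 + 0.5 - 1/7) (isoStart m 1 + 0.5 + 1/7) x +
        blockInd (isoStart m 1 + 2.5 - 1/7) (isoStart m 1 + 2.5 + 1/7) x
      else if k.val = m + n - 1 then
        blockInd (isoStart m k.val + 1) (isoStart m k.val + 2) x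
      else
        blockInd (isoStart m k.val + 1.5 - 0.1) (isoStart m k.val + 1.5 + 0.1) x +
        blockInd (isoStart m (k.val + 1) + 0.5 - 0.2) (isoStart m (k.val + 1) + 0.5 + 0.2) x +
        blockInd (isoStart m (k.val + 1) + 2.5 - 0.2) (isoStart m (k.val + 1) + 2.5 + 0.2) x
  | .sep' => fun x => blockInd 1 2 x

/-- Satisfiability of the 3-SAT formula `φ`. -/
def SatFormula (m n : ℕ) (φ : Fin m → Fin 3 → Fin n × Bool) : Prop :=
  ∃ a : Fin n → Bool, ∀ i : Fin m, ∃ k : Fin 3, a (φ i k).1 = (φ i k).2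

/-- Value of agent `A` for the piece `[s, t]`. -/
noncomputable def cakeVal (m n : ℕ) (φ : Fin m → Fin 3 → Fin n × Bool)
    (A : CakeAgent m n) (s t : ℝ) : ℝ :=
  ∫ x in s..t, cakeDensity m n φ A x

open MeasureTheory intervalIntegral Set

lemma blockInd_nonneg (s t x : ℝ) : 0 ≤ blockInd s t x := by
  unfold blockInd; split <;> norm_num

lemma blockInd_zero {u v s t x : ℝ} (h : t < u ∨ v < s) (hx : s ≤ x) (hx' : x ≤ t) :
    blockInd u v x = 0 := by
  unfold blockInd
  rw [if_neg]
  rintro ⟨h1, h2⟩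
  rcases h with h | h <;> linarith

lemma blockInd_one {s t x : ℝ} (hx : s ≤ x) (hx' : x ≤ t) : blockInd s t x = 1 := by
  unfold blockInd; rw [if_pos ⟨hx, hx'⟩]

lemma blockInd_intervalIntegrable (s t u v : ℝ) :
    IntervalIntegrable (blockInd s t) volume u v := by
  have h : blockInd s t = (Set.Icc s t).indicator (fun _ => (1:ℝ)) := by
    funext x
    simp only [blockInd, Set.indicator_apply, Set.mem_Icc]
  rw [h]
  rw [intervalIntegrable_iff]
  apply (integrable_indicator_iff measurableSet_Icc).2
  refine integrableOn_const (ne_of_lt ?_) enorm_ne_top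
  exact lt_of_le_of_lt (measure_mono (Set.subset_univ _))
    (by rw [Measure.restrict_apply_univ]; exact measure_Ioc_lt_top)

lemma integral_blockInd_self {s t : ℝ} (h : s ≤ t) :
    ∫ x in s..t, blockInd s t x = t - s := by
  have : ∫ x in s..t, blockInd s t x = ∫ x in s..t, (1:ℝ) := by
    apply integral_congr
    intro x hx
    rw [Set.uIcc_of_le h] at hx
    exact blockInd_one hx.1 hx.2
  rw [this, intervalIntegral.integral_const, smul_eq_mul, mul_one]

lemma cakeDensity_nonneg (m n : ℕ) (φ : Fin m → Fin 3 → Fin n × Bool) (A : CakeAgent m n)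
    (x : ℝ) : 0 ≤ cakeDensity m n φ A x := by
  rcases A with ⟨i, k⟩ | j | j | k | _ <;> simp only [cakeDensity] <;>
    [skip; skip; skip; split_ifs; skip] <;>
  · repeat' apply add_nonneg
    all_goals apply blockInd_nonneg

lemma cakeDensity_intervalIntegrable (m n : ℕ) (φ : Fin m → Fin 3 → Fin n × Bool)
    (A : CakeAgent m n) (u v : ℝ) :
    IntervalIntegrable (cakeDensity m n φ A) volume u v := by
  have B := blockInd_intervalIntegrable
  rcases A with ⟨i, k⟩ | j | j | k | _ <;> simp only [cakeDensity]
  · exact (((B _ _ u v).add (B _ _ u v)).add (B _ _ u v)).add (B _ _ u v)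
  · exact B _ _ u v
  · exact B _ _ u v
  · by_cases h0 : k.val = 0
    · simp only [if_pos h0]
      exact (((B _ _ u v).add (B _ _ u v)).add (B _ _ u v)).add (B _ _ u v)
    · by_cases h1 : k.val = m + n - 1
      · simp only [if_neg h0, if_pos h1]; exact B _ _ u v
      · simp only [if_neg h0, if_neg h1]
        exact ((B _ _ u v).add (B _ _ u v)).add (B _ _ u v)
  · exact B _ _ u v

lemma cakeVal_nonneg {m n : ℕ} {φ : Fin m → Fin 3 → Fin n × Bool} {A : CakeAgent m n}
    {u v : ℝ} (h : u ≤ v) : 0 ≤ cakeVal m n φ A u v :=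
  intervalIntegral.integral_nonneg h (fun x _ => cakeDensity_nonneg m n φ A x)

lemma cakeVal_split {m n : ℕ} {φ : Fin m → Fin 3 → Fin n × Bool} {A : CakeAgent m n}
    (u v w : ℝ) : cakeVal m n φ A u v + cakeVal m n φ A v w = cakeVal m n φ A u w :=
  intervalIntegral.integral_add_adjacent_intervals
    (cakeDensity_intervalIntegrable m n φ A u v) (cakeDensity_intervalIntegrable m n φ A v w)

lemma cakeVal_mono {m n : ℕ} {φ : Fin m → Fin 3 → Fin n × Bool} {A : CakeAgent m n}
    {u v u' v' : ℝ} (h1 : u' ≤ u) (h2 : u ≤ v) (h3 : v ≤ v') :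
    cakeVal m n φ A u v ≤ cakeVal m n φ A u' v' := by
  have e1 := cakeVal_split (m := m) (n := n) (φ := φ) (A := A) u' u v
  have e2 := cakeVal_split (m := m) (n := n) (φ := φ) (A := A) u' v v'
  have := cakeVal_nonneg (m := m) (n := n) (φ := φ) (A := A) h1
  have := cakeVal_nonneg (m := m) (n := n) (φ := φ) (A := A) h3
  linarith

lemma cakeVal_zero_of {m n : ℕ} {φ : Fin m → Fin 3 → Fin n × Bool} {A : CakeAgent m n}
    {u v : ℝ} (h : u ≤ v) (hz : ∀ x, u ≤ x → x ≤ v → cakeDensity m n φ A x = 0) :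
    cakeVal m n φ A u v = 0 := by
  unfold cakeVal
  rw [intervalIntegral.integral_congr (g := fun _ => (0:ℝ))]
  · simp
  · intro x hx
    rw [Set.uIcc_of_le h] at hx
    exact hz x hx.1 hx.2

lemma cakeVal_ge_block {m n : ℕ} {φ : Fin m → Fin 3 → Fin n × Bool} {A : CakeAgent m n}
    {s t : ℝ} (hst : s ≤ t) (h : ∀ x, blockInd s t x ≤ cakeDensity m n φ A x) :
    t - s ≤ cakeVal m n φ A s t := by
  rw [← integral_blockInd_self hst]
  exact intervalIntegral.integral_mono_on hst (blockInd_intervalIntegrable s t s t)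
    (cakeDensity_intervalIntegrable m n φ A s t) (fun x _ => h x)

lemma isoStart_eq_of_le {m k : ℕ} (h1 : 1 ≤ k) (h2 : k ≤ m) : isoStart m k = 12 * (k : ℝ) := by
  unfold isoStart
  rw [if_neg (by omega), if_pos h2]

lemma isoStart_eq_of_gt {m k : ℕ} (h2 : m < k) : isoStart m k = 12 * (m : ℝ) + 7 * ((k : ℝ) - m) := by
  unfold isoStart
  rw [if_neg (by omega), if_neg (by omega)]

lemma isoStart_ge {m k : ℕ} (hm : 1 ≤ m) (h1 : 1 ≤ k) : 12 ≤ isoStart m k := by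
  by_cases h : k ≤ m
  · rw [isoStart_eq_of_le h1 h]
    have : (1:ℝ) ≤ k := by exact_mod_cast h1
    linarith
  · rw [isoStart_eq_of_gt (by omega)]
    have h1' : (m:ℝ) ≥ 1 := by exact_mod_cast hm
    have h2' : (k:ℝ) ≥ m + 1 := by exact_mod_cast (by omega : k ≥ m + 1)
    linarith

lemma isoStart_ub {m n k : ℕ} (hn : 1 ≤ n) (h2 : k ≤ m + n - 1) :
    isoStart m k ≤ 12 * (m : ℝ) + 7 * n - 7 := by
  have hn' : (1:ℝ) ≤ n := by exact_mod_cast hn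
  have hm0 : (0:ℝ) ≤ m := Nat.cast_nonneg m
  by_cases h0 : k = 0
  · subst h0; unfold isoStart; rw [if_pos rfl]; linarith
  by_cases h : k ≤ m
  · rw [isoStart_eq_of_le (by omega) h]
    have : (k:ℝ) ≤ m := by exact_mod_cast h
    linarith
  · rw [isoStart_eq_of_gt (by omega)]
    have : (k:ℝ) ≤ m + n - 1 := by
      have : k ≤ m + (n-1) := by omega
      have := (Nat.cast_le (α := ℝ)).2 this
      push_cast [Nat.cast_sub hn] at this ⊢
      linarith
    linarith

lemma isoStart_gap {m k k' : ℕ} (h1 : 1 ≤ k) (h : k < k') :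
    isoStart m k + 7 ≤ isoStart m k' := by
  by_cases hk : k ≤ m <;> by_cases hk' : k' ≤ m
  · rw [isoStart_eq_of_le h1 hk, isoStart_eq_of_le (by omega) hk']
    have : (k:ℝ) + 1 ≤ k' := by exact_mod_cast h
    linarith
  · rw [isoStart_eq_of_le h1 hk, isoStart_eq_of_gt (by omega)]
    have h1' : (k:ℝ) ≤ m := by exact_mod_cast hk
    have h2' : (m:ℝ) + 1 ≤ k' := by exact_mod_cast (by omega : m + 1 ≤ k')
    linarith
  · omega
  · rw [isoStart_eq_of_gt (by omega), isoStart_eq_of_gt (by omega)]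
    have : (k:ℝ) + 1 ≤ k' := by exact_mod_cast h
    linarith

lemma iso_clause {m k i : ℕ} (h1 : 1 ≤ k) (hi : i < m) :
    isoStart m k + 3 ≤ 3 + 12 * (i:ℝ) ∨ 12 * (i:ℝ) + 12 ≤ isoStart m k := by
  by_cases h : k ≤ i
  · left
    rw [isoStart_eq_of_le h1 (by omega)]
    have : (k:ℝ) ≤ i := by exact_mod_cast h
    linarith
  · right
    by_cases hk : k ≤ m
    · rw [isoStart_eq_of_le h1 hk]
      have : (i:ℝ) + 1 ≤ k := by exact_mod_cast (by omega : i + 1 ≤ k)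
      linarith
    · rw [isoStart_eq_of_gt (by omega)]
      have h2' : (i:ℝ) + 1 ≤ m := by exact_mod_cast (by omega : i + 1 ≤ m)
      have h3' : (m:ℝ) + 1 ≤ k := by exact_mod_cast (by omega : m + 1 ≤ k)
      linarith

lemma iso_var {m n k j : ℕ} (h1 : 1 ≤ k) (hj : j < n) :
    isoStart m k + 3 ≤ 3 + 12 * (m:ℝ) + 7 * j ∨ 3 + 12 * (m:ℝ) + 7 * j + 4 ≤ isoStart m k := by
  by_cases h : k ≤ m + j
  · left
    by_cases hk : k ≤ m
    · rw [isoStart_eq_of_le h1 hk]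
      have : (k:ℝ) ≤ m := by exact_mod_cast hk
      have : (0:ℝ) ≤ j := by positivity
      linarith
    · rw [isoStart_eq_of_gt (by omega)]
      have : (k:ℝ) ≤ m + j := by exact_mod_cast h
      linarith
  · right
    rw [isoStart_eq_of_gt (by omega)]
    have : (m:ℝ) + j + 1 ≤ k := by exact_mod_cast (by omega : m + j + 1 ≤ k)
    linarith

/-- The private block of each agent. -/
noncomputable def pbI (m n : ℕ) : CakeAgent m n → ℝ × ℝ
  | .cl i k => (clauseStart i + (k : ℕ), clauseStart i + (k : ℕ) + 0.24)
  | .lt j => (varStart m j, varStart m j + 1)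
  | .rt j => (varStart m j + 3, varStart m j + 4)
  | .sep k =>
      if k.val = 0 then (2.5 - 1/7, 2.5 + 1/7)
      else if k.val = m + n - 1 then (isoStart m k.val + 1, isoStart m k.val + 2)
      else (isoStart m k.val + 1.5 - 0.1, isoStart m k.val + 1.5 + 0.1)
  | .sep' => (1, 2)

lemma pb_len (m n : ℕ) (A : CakeAgent m n) : 0.2 ≤ (pbI m n A).2 - (pbI m n A).1 := by
  rcases A with ⟨i, k⟩ | j | j | k | _ <;> simp only [pbI] <;> [skip; skip; skip; split_ifs; skip] <;>
    norm_num

lemma pb_le (m n : ℕ) (A : CakeAgent m n) : (pbI m n A).1 ≤ (pbI m n A).2 := by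
  have := pb_len m n A; linarith

lemma pb_pos (m n : ℕ) (hm : 1 ≤ m) (A : CakeAgent m n) : 0 ≤ (pbI m n A).1 := by
  rcases A with ⟨i, k⟩ | j | j | k | _ <;>
    simp only [pbI, clauseStart, varStart] <;> [skip; skip; skip; split_ifs with h1 h2; skip] <;>
    try dsimp only
  · positivity
  · positivity
  · positivity
  · norm_num
  · have := isoStart_ge (m := m) (k := k.val) hm (by omega); linarith
  · have := isoStart_ge (m := m) (k := k.val) hm (by omega); linarith
  · norm_num

lemma pb_lt_L (m n : ℕ) (hm : 1 ≤ m) (hn : 1 ≤ n) (A : CakeAgent m n) :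
    (pbI m n A).2 ≤ 12 * m + 7 * n + 3 := by
  have hm' : (1:ℝ) ≤ m := by exact_mod_cast hm
  have hn' : (1:ℝ) ≤ n := by exact_mod_cast hn
  rcases A with ⟨i, k⟩ | j | j | k | _ <;>
    simp only [pbI, clauseStart, varStart] <;> [skip; skip; skip; split_ifs with h1 h2; skip] <;>
    try dsimp only
  · have hi : (i:ℝ) + 1 ≤ m := by exact_mod_cast i.isLt
    have hk : (k:ℕ) ≤ 2 := by omega
    have hk' : ((k:ℕ):ℝ) ≤ 2 := by exact_mod_cast hk
    linarith
  · have hj : (j:ℝ) + 1 ≤ n := by exact_mod_cast j.isLt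
    linarith
  · have hj : (j:ℝ) + 1 ≤ n := by exact_mod_cast j.isLt
    linarith
  · linarith
  · have := isoStart_ub (m := m) (n := n) (k := k.val) hn (by omega)
    linarith
  · have := isoStart_ub (m := m) (n := n) (k := k.val) hn (by omega)
    linarith
  · linarith

lemma pb_le_density (m n : ℕ) (φ : Fin m → Fin 3 → Fin n × Bool) (A : CakeAgent m n) (x : ℝ) :
    blockInd (pbI m n A).1 (pbI m n A).2 x ≤ cakeDensity m n φ A x := by
  have nn := blockInd_nonneg
  rcases A with ⟨i, k⟩ | j | j | k | _ <;>
    simp only [pbI, cakeDensity] <;> [skip; skip; skip; split_ifs with h1 h2; skip] <;>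
    try dsimp only
  · have := nn (clauseStart i + (k:ℕ) + 3) (clauseStart i + (k:ℕ) + 3.24) x
    have := nn (clauseStart i + (k:ℕ) + 6) (clauseStart i + (k:ℕ) + 6.24) x
    have := nn (varStart m (φ i k).1 + (if (φ i k).2 then 1.5 else 2.5) - 0.14)
               (varStart m (φ i k).1 + (if (φ i k).2 then 1.5 else 2.5) + 0.14) x
    linarith
  · exact le_rfl
  · exact le_rfl
  · have := nn (0.5 - 1/14) (0.5 + 1/14) x
    have := nn (isoStart m 1 + 0.5 - 1/7) (isoStart m 1 + 0.5 + 1/7) x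
    have := nn (isoStart m 1 + 2.5 - 1/7) (isoStart m 1 + 2.5 + 1/7) x
    linarith
  · exact le_rfl
  · have := nn (isoStart m (k.val + 1) + 0.5 - 0.2) (isoStart m (k.val + 1) + 0.5 + 0.2) x
    have := nn (isoStart m (k.val + 1) + 2.5 - 0.2) (isoStart m (k.val + 1) + 2.5 + 0.2) x
    linarith
  · exact le_rfl

lemma nat_real_tri (a b : ℕ) : (a:ℝ) + 1 ≤ b ∨ (a:ℝ) = b ∨ (b:ℝ) + 1 ≤ a := by
  rcases Nat.lt_trichotomy a b with h | h | h
  · left; exact_mod_cast h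
  · right; left; exact_mod_cast h
  · right; right; exact_mod_cast h

lemma cl_vanish {m n : ℕ} (φ : Fin m → Fin 3 → Fin n × Bool) (i : Fin m) (k : Fin 3)
    {s t x : ℝ} (hx : s ≤ x) (hx' : x ≤ t)
    (h1 : t < clauseStart i + (k:ℕ) ∨ clauseStart i + (k:ℕ) + 0.24 < s)
    (h2 : t < clauseStart i + (k:ℕ) + 3 ∨ clauseStart i + (k:ℕ) + 3.24 < s)
    (h3 : t < clauseStart i + (k:ℕ) + 6 ∨ clauseStart i + (k:ℕ) + 6.24 < s)
    (h4 : t < varStart m (φ i k).1 + 1.36 ∨ varStart m (φ i k).1 + 2.64 < s) :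
    cakeDensity m n φ (.cl i k) x = 0 := by
  have hγ1 : (1.36:ℝ) ≤ (if (φ i k).2 then (1.5:ℝ) else 2.5) - 0.14 := by split_ifs <;> norm_num
  have hγ2 : (if (φ i k).2 then (1.5:ℝ) else 2.5) + 0.14 ≤ 2.64 := by split_ifs <;> norm_num
  have h4' : t < varStart m (φ i k).1 + (if (φ i k).2 then (1.5:ℝ) else 2.5) - 0.14 ∨
      varStart m (φ i k).1 + (if (φ i k).2 then (1.5:ℝ) else 2.5) + 0.14 < s := by
    rcases h4 with h | h
    · left; linarith
    · right; linarith
  simp only [cakeDensity]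
  rw [blockInd_zero h1 hx hx', blockInd_zero h2 hx hx', blockInd_zero h3 hx hx',
      blockInd_zero h4' hx hx']
  norm_num

lemma sep0_vanish {m n : ℕ} (hm : 1 ≤ m) (φ : Fin m → Fin 3 → Fin n × Bool)
    (k : Fin (m + n)) (hk : k.val = 0) {s t x : ℝ} (hx : s ≤ x) (hx' : x ≤ t)
    (h1 : t < 0.42 ∨ 0.58 < s) (h2 : t < 2.35 ∨ 2.65 < s)
    (h3 : t < 12.35 ∨ 12.65 < s) (h4 : t < 14.35 ∨ 14.65 < s) :
    cakeDensity m n φ (.sep k) x = 0 := by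
  have e1 : isoStart m 1 = 12 := by rw [isoStart_eq_of_le le_rfl hm]; norm_num
  simp only [cakeDensity, if_pos hk, e1]
  have h1' : t < 0.5 - 1/14 ∨ (0.5:ℝ) + 1/14 < s := by
    rcases h1 with h | h
    · left; linarith
    · right; linarith
  have h2' : t < 2.5 - 1/7 ∨ (2.5:ℝ) + 1/7 < s := by
    rcases h2 with h | h
    · left; linarith
    · right; linarith
  have h3' : t < 12 + 0.5 - 1/7 ∨ (12:ℝ) + 0.5 + 1/7 < s := by
    rcases h3 with h | h
    · left; linarith
    · right; linarith
  have h4' : t < 12 + 2.5 - 1/7 ∨ (12:ℝ) + 2.5 + 1/7 < s := by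
    rcases h4 with h | h
    · left; linarith
    · right; linarith
  rw [blockInd_zero h1' hx hx', blockInd_zero h2' hx hx', blockInd_zero h3' hx hx',
      blockInd_zero h4' hx hx']
  norm_num

lemma sepMid_vanish {m n : ℕ} (φ : Fin m → Fin 3 → Fin n × Bool)
    (k : Fin (m + n)) (hk0 : ¬k.val = 0) (hk1 : ¬k.val = m + n - 1) {s t x : ℝ}
    (hx : s ≤ x) (hx' : x ≤ t)
    (h1 : t < isoStart m k.val + 1.4 ∨ isoStart m k.val + 1.6 < s)
    (h2 : t < isoStart m (k.val+1) + 0.3 ∨ isoStart m (k.val+1) + 0.7 < s)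
    (h3 : t < isoStart m (k.val+1) + 2.3 ∨ isoStart m (k.val+1) + 2.7 < s) :
    cakeDensity m n φ (.sep k) x = 0 := by
  simp only [cakeDensity, if_neg hk0, if_neg hk1]
  have h1' : t < isoStart m k.val + 1.5 - 0.1 ∨ isoStart m k.val + 1.5 + 0.1 < s := by
    rcases h1 with h | h
    · left; linarith
    · right; linarith
  have h2' : t < isoStart m (k.val+1) + 0.5 - 0.2 ∨ isoStart m (k.val+1) + 0.5 + 0.2 < s := by
    rcases h2 with h | h
    · left; linarith
    · right; linarith
  have h3' : t < isoStart m (k.val+1) + 2.5 - 0.2 ∨ isoStart m (k.val+1) + 2.5 + 0.2 < s := by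
    rcases h3 with h | h
    · left; linarith
    · right; linarith
  rw [blockInd_zero h1' hx hx', blockInd_zero h2' hx hx', blockInd_zero h3' hx hx']
  norm_num

lemma sepLast_vanish {m n : ℕ} (φ : Fin m → Fin 3 → Fin n × Bool)
    (k : Fin (m + n)) (hk0 : ¬k.val = 0) (hk1 : k.val = m + n - 1) {s t x : ℝ}
    (hx : s ≤ x) (hx' : x ≤ t)
    (h1 : t < isoStart m k.val + 1 ∨ isoStart m k.val + 2 < s) :
    cakeDensity m n φ (.sep k) x = 0 := by
  simp only [cakeDensity, if_neg hk0, if_pos hk1]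
  exact blockInd_zero h1 hx hx'

lemma lt_vanish {m n : ℕ} (φ : Fin m → Fin 3 → Fin n × Bool) (j : Fin n) {s t x : ℝ}
    (hx : s ≤ x) (hx' : x ≤ t)
    (h1 : t < varStart m j ∨ varStart m j + 1 < s) :
    cakeDensity m n φ (.lt j) x = 0 := blockInd_zero h1 hx hx'

lemma rt_vanish {m n : ℕ} (φ : Fin m → Fin 3 → Fin n × Bool) (j : Fin n) {s t x : ℝ}
    (hx : s ≤ x) (hx' : x ≤ t)
    (h1 : t < varStart m j + 3 ∨ varStart m j + 4 < s) :
    cakeDensity m n φ (.rt j) x = 0 := blockInd_zero h1 hx hx'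

lemma sep'_vanish {m n : ℕ} (φ : Fin m → Fin 3 → Fin n × Bool) {s t x : ℝ}
    (hx : s ≤ x) (hx' : x ≤ t) (h1 : t < 1 ∨ 2 < s) :
    cakeDensity m n φ (.sep') x = 0 := blockInd_zero h1 hx hx'

section ZPB
variable {m n : ℕ} (φ : Fin m → Fin 3 → Fin n × Bool)

lemma zpb_cl (hm : 1 ≤ m) (hn : 1 ≤ n) (i : Fin m) (k : Fin 3) (C : CakeAgent m n)
    (hne : C ≠ .cl i k) {x : ℝ}
    (hx : clauseStart i + (k:ℕ) ≤ x) (hx' : x ≤ clauseStart i + (k:ℕ) + 0.24) :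
    cakeDensity m n φ C x = 0 := by
  have hm' : (1:ℝ) ≤ m := by exact_mod_cast hm
  have hi : (i.val:ℝ) + 1 ≤ m := by exact_mod_cast i.isLt
  have hi0 : (0:ℝ) ≤ i.val := Nat.cast_nonneg _
  have hk2 : (k.val:ℝ) ≤ 2 := by exact_mod_cast (by omega : k.val ≤ 2)
  have hk0 : (0:ℝ) ≤ k.val := Nat.cast_nonneg _
  simp only [clauseStart] at hx hx'
  have e1 : isoStart m 1 = 12 := by rw [isoStart_eq_of_le le_rfl hm]; norm_num
  rcases C with ⟨i', k'⟩ | j' | j' | k' | _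
  · -- clause agent
    have hi' : (i'.val:ℝ) + 1 ≤ m := by exact_mod_cast i'.isLt
    have hi0' : (0:ℝ) ≤ i'.val := Nat.cast_nonneg _
    have hk2' : (k'.val:ℝ) ≤ 2 := by exact_mod_cast (by omega : k'.val ≤ 2)
    have hk0' : (0:ℝ) ≤ k'.val := Nat.cast_nonneg _
    have hj0' : (0:ℝ) ≤ ((φ i' k').1.val :ℝ) := Nat.cast_nonneg _
    have hlit : x ≤ 3 + 12 * (i.val:ℝ) + k.val + 0.24 ∧
        (3 + 12 * (i.val:ℝ) + k.val + 0.24 < varStart m (φ i' k').1 + 1.36) := by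
      refine ⟨hx', ?_⟩
      simp only [varStart]; linarith
    rcases nat_real_tri i'.val i.val with hii | hii | hii
    · exact cl_vanish φ i' k' hx hx'
        (Or.inr (by simp only [clauseStart]; linarith))
        (Or.inr (by simp only [clauseStart]; linarith))
        (Or.inr (by simp only [clauseStart]; linarith))
        (Or.inl hlit.2)
    · have hieq : i' = i := Fin.ext (by exact_mod_cast hii)
      have hkk : k'.val ≠ k.val := by
        intro h
        exact hne (by rw [hieq, Fin.ext h])
      rcases nat_real_tri k'.val k.val with hkk' | hkk' | hkk'
      · exact cl_vanish φ i' k' hx hx'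
          (Or.inr (by simp only [clauseStart]; linarith))
          (Or.inl (by simp only [clauseStart]; linarith))
          (Or.inl (by simp only [clauseStart]; linarith))
          (Or.inl hlit.2)
      · exact absurd (by exact_mod_cast hkk') hkk
      · exact cl_vanish φ i' k' hx hx'
          (Or.inl (by simp only [clauseStart]; linarith))
          (Or.inl (by simp only [clauseStart]; linarith))
          (Or.inl (by simp only [clauseStart]; linarith))
          (Or.inl hlit.2)
    · exact cl_vanish φ i' k' hx hx'
        (Or.inl (by simp only [clauseStart]; linarith))
        (Or.inl (by simp only [clauseStart]; linarith))
        (Or.inl (by simp only [clauseStart]; linarith))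
        (Or.inl hlit.2)
  · -- lt j'
    have hj0' : (0:ℝ) ≤ j'.val := Nat.cast_nonneg _
    exact lt_vanish φ j' hx hx' (by left; simp only [varStart]; linarith)
  · have hj0' : (0:ℝ) ≤ j'.val := Nat.cast_nonneg _
    exact rt_vanish φ j' hx hx' (by left; simp only [varStart]; linarith)
  · by_cases h0 : k'.val = 0
    · refine sep0_vanish hm φ k' h0 hx hx' ?_ ?_ ?_ ?_
      · right; linarith
      · right; linarith
      · rcases iso_clause (m := m) (k := 1) le_rfl i.isLt with h | h <;> rw [e1] at h
        · right; linarith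
        · left; linarith
      · rcases iso_clause (m := m) (k := 1) le_rfl i.isLt with h | h <;> rw [e1] at h
        · right; linarith
        · left; linarith
    · by_cases h1 : k'.val = m + n - 1
      · refine sepLast_vanish φ k' h0 h1 hx hx' ?_
        rcases iso_clause (m := m) (k := k'.val) (by omega) i.isLt with h | h
        · right; linarith
        · left; linarith
      · refine sepMid_vanish φ k' h0 h1 hx hx' ?_ ?_ ?_
        · rcases iso_clause (m := m) (k := k'.val) (by omega) i.isLt with h | h
          · right; linarith
          · left; linarith
        · rcases iso_clause (m := m) (k := k'.val + 1) (by omega) i.isLt with h | h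
          · right; linarith
          · left; linarith
        · rcases iso_clause (m := m) (k := k'.val + 1) (by omega) i.isLt with h | h
          · right; linarith
          · left; linarith
  · exact sep'_vanish φ hx hx' (by right; linarith)

lemma zpb_lt (hm : 1 ≤ m) (hn : 1 ≤ n) (j : Fin n) (C : CakeAgent m n)
    (hne : C ≠ .lt j) {x : ℝ}
    (hx : varStart m j ≤ x) (hx' : x ≤ varStart m j + 1) :
    cakeDensity m n φ C x = 0 := by
  have hm' : (1:ℝ) ≤ m := by exact_mod_cast hm
  have hj : (j.val:ℝ) + 1 ≤ n := by exact_mod_cast j.isLt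
  have hj0 : (0:ℝ) ≤ j.val := Nat.cast_nonneg _
  simp only [varStart] at hx hx'
  have e1 : isoStart m 1 = 12 := by rw [isoStart_eq_of_le le_rfl hm]; norm_num
  rcases C with ⟨i', k'⟩ | j' | j' | k' | _
  · have hi' : (i'.val:ℝ) + 1 ≤ m := by exact_mod_cast i'.isLt
    have hi0' : (0:ℝ) ≤ i'.val := Nat.cast_nonneg _
    have hk2' : (k'.val:ℝ) ≤ 2 := by exact_mod_cast (by omega : k'.val ≤ 2)
    have hk0' : (0:ℝ) ≤ k'.val := Nat.cast_nonneg _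
    refine cl_vanish φ i' k' hx hx'
      (Or.inr (by simp only [clauseStart]; linarith))
      (Or.inr (by simp only [clauseStart]; linarith))
      (Or.inr (by simp only [clauseStart]; linarith)) ?_
    rcases nat_real_tri ((φ i' k').1.val) j.val with h | h | h
    · right; simp only [varStart]; linarith
    · left; simp only [varStart]; linarith
    · left; simp only [varStart]; linarith
  · have hne' : j'.val ≠ j.val := fun h => hne (by rw [Fin.ext h])
    refine lt_vanish φ j' hx hx' ?_
    rcases nat_real_tri j'.val j.val with h | h | h
    · right; simp only [varStart]; linarith
    · exact absurd (by exact_mod_cast h) hne'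
    · left; simp only [varStart]; linarith
  · refine rt_vanish φ j' hx hx' ?_
    rcases nat_real_tri j'.val j.val with h | h | h
    · right; simp only [varStart]; linarith
    · left; simp only [varStart]; linarith
    · left; simp only [varStart]; linarith
  · by_cases h0 : k'.val = 0
    · exact sep0_vanish hm φ k' h0 hx hx' (Or.inr (by linarith)) (Or.inr (by linarith))
        (Or.inr (by linarith)) (Or.inr (by linarith))
    · by_cases h1 : k'.val = m + n - 1
      · refine sepLast_vanish φ k' h0 h1 hx hx' ?_
        rcases iso_var (m := m) (k := k'.val) (by omega) j.isLt with h | h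
        · right; linarith
        · left; linarith
      · refine sepMid_vanish φ k' h0 h1 hx hx' ?_ ?_ ?_
        · rcases iso_var (m := m) (k := k'.val) (by omega) j.isLt with h | h
          · right; linarith
          · left; linarith
        · rcases iso_var (m := m) (k := k'.val + 1) (by omega) j.isLt with h | h
          · right; linarith
          · left; linarith
        · rcases iso_var (m := m) (k := k'.val + 1) (by omega) j.isLt with h | h
          · right; linarith
          · left; linarith
  · exact sep'_vanish φ hx hx' (by right; linarith)

lemma zpb_rt (hm : 1 ≤ m) (hn : 1 ≤ n) (j : Fin n) (C : CakeAgent m n)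
    (hne : C ≠ .rt j) {x : ℝ}
    (hx : varStart m j + 3 ≤ x) (hx' : x ≤ varStart m j + 4) :
    cakeDensity m n φ C x = 0 := by
  have hm' : (1:ℝ) ≤ m := by exact_mod_cast hm
  have hj : (j.val:ℝ) + 1 ≤ n := by exact_mod_cast j.isLt
  have hj0 : (0:ℝ) ≤ j.val := Nat.cast_nonneg _
  simp only [varStart] at hx hx'
  have e1 : isoStart m 1 = 12 := by rw [isoStart_eq_of_le le_rfl hm]; norm_num
  rcases C with ⟨i', k'⟩ | j' | j' | k' | _
  · have hi' : (i'.val:ℝ) + 1 ≤ m := by exact_mod_cast i'.isLt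
    have hi0' : (0:ℝ) ≤ i'.val := Nat.cast_nonneg _
    have hk2' : (k'.val:ℝ) ≤ 2 := by exact_mod_cast (by omega : k'.val ≤ 2)
    have hk0' : (0:ℝ) ≤ k'.val := Nat.cast_nonneg _
    refine cl_vanish φ i' k' hx hx'
      (Or.inr (by simp only [clauseStart]; linarith))
      (Or.inr (by simp only [clauseStart]; linarith))
      (Or.inr (by simp only [clauseStart]; linarith)) ?_
    rcases nat_real_tri ((φ i' k').1.val) j.val with h | h | h
    · right; simp only [varStart]; linarith
    · right; simp only [varStart]; linarith
    · left; simp only [varStart]; linarith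
  · refine lt_vanish φ j' hx hx' ?_
    rcases nat_real_tri j'.val j.val with h | h | h
    · right; simp only [varStart]; linarith
    · right; simp only [varStart]; linarith
    · left; simp only [varStart]; linarith
  · have hne' : j'.val ≠ j.val := fun h => hne (by rw [Fin.ext h])
    refine rt_vanish φ j' hx hx' ?_
    rcases nat_real_tri j'.val j.val with h | h | h
    · right; simp only [varStart]; linarith
    · exact absurd (by exact_mod_cast h) hne'
    · left; simp only [varStart]; linarith
  · by_cases h0 : k'.val = 0
    · exact sep0_vanish hm φ k' h0 hx hx' (Or.inr (by linarith)) (Or.inr (by linarith))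
        (Or.inr (by linarith)) (Or.inr (by linarith))
    · by_cases h1 : k'.val = m + n - 1
      · refine sepLast_vanish φ k' h0 h1 hx hx' ?_
        rcases iso_var (m := m) (k := k'.val) (by omega) j.isLt with h | h
        · right; linarith
        · left; linarith
      · refine sepMid_vanish φ k' h0 h1 hx hx' ?_ ?_ ?_
        · rcases iso_var (m := m) (k := k'.val) (by omega) j.isLt with h | h
          · right; linarith
          · left; linarith
        · rcases iso_var (m := m) (k := k'.val + 1) (by omega) j.isLt with h | h
          · right; linarith
          · left; linarith
        · rcases iso_var (m := m) (k := k'.val + 1) (by omega) j.isLt with h | h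
          · right; linarith
          · left; linarith
  · exact sep'_vanish φ hx hx' (by right; linarith)

lemma zpb_sep0 (hm : 1 ≤ m) (hn : 1 ≤ n) (k : Fin (m+n)) (hk : k.val = 0)
    (C : CakeAgent m n) (hne : C ≠ .sep k) {x : ℝ}
    (hx : 2.5 - 1/7 ≤ x) (hx' : x ≤ 2.5 + 1/7) :
    cakeDensity m n φ C x = 0 := by
  have hm' : (1:ℝ) ≤ m := by exact_mod_cast hm
  rcases C with ⟨i', k'⟩ | j' | j' | k' | _
  · have hi0' : (0:ℝ) ≤ i'.val := Nat.cast_nonneg _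
    have hk0' : (0:ℝ) ≤ k'.val := Nat.cast_nonneg _
    have hj0' : (0:ℝ) ≤ ((φ i' k').1.val :ℝ) := Nat.cast_nonneg _
    exact cl_vanish φ i' k' hx hx'
      (Or.inl (by simp only [clauseStart]; linarith))
      (Or.inl (by simp only [clauseStart]; linarith))
      (Or.inl (by simp only [clauseStart]; linarith))
      (Or.inl (by simp only [varStart]; linarith))
  · have hj0' : (0:ℝ) ≤ j'.val := Nat.cast_nonneg _
    exact lt_vanish φ j' hx hx' (Or.inl (by simp only [varStart]; linarith))
  · have hj0' : (0:ℝ) ≤ j'.val := Nat.cast_nonneg _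
    exact rt_vanish φ j' hx hx' (Or.inl (by simp only [varStart]; linarith))
  · by_cases h0 : k'.val = 0
    · exact absurd (Fin.ext (h0.trans hk.symm) ▸ rfl) hne
    · by_cases h1 : k'.val = m + n - 1
      · have hG := isoStart_ge (m := m) (k := k'.val) hm (by omega)
        exact sepLast_vanish φ k' h0 h1 hx hx' (Or.inl (by linarith))
      · have hg := isoStart_ge (m := m) (k := k'.val) hm (by omega)
        have hg' := isoStart_ge (m := m) (k := k'.val + 1) hm (by omega)
        exact sepMid_vanish φ k' h0 h1 hx hx' (Or.inl (by linarith))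
          (Or.inl (by linarith)) (Or.inl (by linarith))
  · exact sep'_vanish φ hx hx' (by right; norm_num)

lemma zpb_sep' (hm : 1 ≤ m) (hn : 1 ≤ n) (C : CakeAgent m n) (hne : C ≠ .sep') {x : ℝ}
    (hx : 1 ≤ x) (hx' : x ≤ 2) :
    cakeDensity m n φ C x = 0 := by
  have hm' : (1:ℝ) ≤ m := by exact_mod_cast hm
  rcases C with ⟨i', k'⟩ | j' | j' | k' | _
  · have hi0' : (0:ℝ) ≤ i'.val := Nat.cast_nonneg _
    have hk0' : (0:ℝ) ≤ k'.val := Nat.cast_nonneg _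
    have hj0' : (0:ℝ) ≤ ((φ i' k').1.val :ℝ) := Nat.cast_nonneg _
    exact cl_vanish φ i' k' hx hx'
      (Or.inl (by simp only [clauseStart]; linarith))
      (Or.inl (by simp only [clauseStart]; linarith))
      (Or.inl (by simp only [clauseStart]; linarith))
      (Or.inl (by simp only [varStart]; linarith))
  · have hj0' : (0:ℝ) ≤ j'.val := Nat.cast_nonneg _
    exact lt_vanish φ j' hx hx' (Or.inl (by simp only [varStart]; linarith))
  · have hj0' : (0:ℝ) ≤ j'.val := Nat.cast_nonneg _
    exact rt_vanish φ j' hx hx' (Or.inl (by simp only [varStart]; linarith))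
  · by_cases h0 : k'.val = 0
    · exact sep0_vanish hm φ k' h0 hx hx' (Or.inr (by norm_num)) (Or.inl (by norm_num))
        (Or.inl (by norm_num)) (Or.inl (by norm_num))
    · by_cases h1 : k'.val = m + n - 1
      · have hG := isoStart_ge (m := m) (k := k'.val) hm (by omega)
        exact sepLast_vanish φ k' h0 h1 hx hx' (Or.inl (by linarith))
      · have hg := isoStart_ge (m := m) (k := k'.val) hm (by omega)
        have hg' := isoStart_ge (m := m) (k := k'.val + 1) hm (by omega)
        exact sepMid_vanish φ k' h0 h1 hx hx' (Or.inl (by linarith))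
          (Or.inl (by linarith)) (Or.inl (by linarith))
  · exact absurd rfl hne

lemma zpb_sepMid (hm : 1 ≤ m) (hn : 1 ≤ n) (k : Fin (m+n)) (hk0 : ¬k.val = 0)
    (hk1 : ¬k.val = m + n - 1) (C : CakeAgent m n) (hne : C ≠ .sep k) {x : ℝ}
    (hx : isoStart m k.val + 1.5 - 0.1 ≤ x) (hx' : x ≤ isoStart m k.val + 1.5 + 0.1) :
    cakeDensity m n φ C x = 0 := by
  have hm' : (1:ℝ) ≤ m := by exact_mod_cast hm
  have hg : 12 ≤ isoStart m k.val := isoStart_ge hm (by omega)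
  have e1 : isoStart m 1 = 12 := by rw [isoStart_eq_of_le le_rfl hm]; norm_num
  rcases C with ⟨i', k'⟩ | j' | j' | k' | _
  · have hi0' : (0:ℝ) ≤ i'.val := Nat.cast_nonneg _
    have hk2' : (k'.val:ℝ) ≤ 2 := by exact_mod_cast (by omega : k'.val ≤ 2)
    have hk0' : (0:ℝ) ≤ k'.val := Nat.cast_nonneg _
    refine cl_vanish φ i' k' hx hx' ?b1 ?b2 ?b3 ?b4
    case b4 =>
      rcases iso_var (m := m) (k := k.val) (by omega) ((φ i' k').1).isLt with h | h
      · left; simp only [varStart]; linarith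
      · right; simp only [varStart]; linarith
    all_goals rcases iso_clause (m := m) (k := k.val) (by omega) i'.isLt with h | h
    · left; simp only [clauseStart]; linarith
    · right; simp only [clauseStart]; linarith
    · left; simp only [clauseStart]; linarith
    · right; simp only [clauseStart]; linarith
    · left; simp only [clauseStart]; linarith
    · right; simp only [clauseStart]; linarith
  · refine lt_vanish φ j' hx hx' ?_
    rcases iso_var (m := m) (k := k.val) (by omega) j'.isLt with h | h
    · left; simp only [varStart]; linarith
    · right; simp only [varStart]; linarith
  · refine rt_vanish φ j' hx hx' ?_
    rcases iso_var (m := m) (k := k.val) (by omega) j'.isLt with h | h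
    · left; simp only [varStart]; linarith
    · right; simp only [varStart]; linarith
  · by_cases h0 : k'.val = 0
    · by_cases hke : k.val = 1
      · have eg : isoStart m k.val = 12 := by rw [hke, e1]
        refine sep0_vanish hm φ k' h0 hx hx' (Or.inr (by linarith)) (Or.inr (by linarith))
          (Or.inr (by rw [eg] at hx; linarith)) (Or.inl (by rw [eg] at hx'; linarith))
      · have hgap : isoStart m 1 + 7 ≤ isoStart m k.val := isoStart_gap le_rfl (by omega)
        rw [e1] at hgap
        refine sep0_vanish hm φ k' h0 hx hx' (Or.inr (by linarith)) (Or.inr (by linarith))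
          (Or.inr (by linarith)) (Or.inr (by linarith))
    · by_cases h1 : k'.val = m + n - 1
      · have hgap : isoStart m k.val + 7 ≤ isoStart m k'.val :=
          isoStart_gap (by omega) (by omega)
        exact sepLast_vanish φ k' h0 h1 hx hx' (Or.inl (by linarith))
      · have hne' : k'.val ≠ k.val := fun h => hne (by rw [Fin.ext h])
        rcases Nat.lt_trichotomy k'.val k.val with h | h | h
        · have hgap1 : isoStart m k'.val + 7 ≤ isoStart m k.val := isoStart_gap (by omega) h
          by_cases he : k'.val + 1 = k.val
          · have eg : isoStart m (k'.val + 1) = isoStart m k.val := by rw [he]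
            refine sepMid_vanish φ k' h0 h1 hx hx' (Or.inr (by linarith))
              (Or.inr (by rw [eg]; linarith)) (Or.inl (by rw [eg]; linarith))
          · have hgap2 : isoStart m (k'.val + 1) + 7 ≤ isoStart m k.val :=
              isoStart_gap (by omega) (by omega)
            exact sepMid_vanish φ k' h0 h1 hx hx' (Or.inr (by linarith))
              (Or.inr (by linarith)) (Or.inr (by linarith))
        · exact absurd h hne'
        · have hgap1 : isoStart m k.val + 7 ≤ isoStart m k'.val := isoStart_gap (by omega) h
          have hgap2 : isoStart m k.val + 7 ≤ isoStart m (k'.val + 1) :=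
            isoStart_gap (by omega) (by omega)
          exact sepMid_vanish φ k' h0 h1 hx hx' (Or.inl (by linarith))
            (Or.inl (by linarith)) (Or.inl (by linarith))
  · exact sep'_vanish φ hx hx' (by right; linarith)

lemma zpb_sepLast (hm : 1 ≤ m) (hn : 1 ≤ n) (k : Fin (m+n)) (hk0 : ¬k.val = 0)
    (hk1 : k.val = m + n - 1) (C : CakeAgent m n) (hne : C ≠ .sep k) {x : ℝ}
    (hx : isoStart m k.val + 1 ≤ x) (hx' : x ≤ isoStart m k.val + 2) :
    cakeDensity m n φ C x = 0 := by
  have hm' : (1:ℝ) ≤ m := by exact_mod_cast hm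
  have hg : 12 ≤ isoStart m k.val := isoStart_ge hm (by omega)
  have e1 : isoStart m 1 = 12 := by rw [isoStart_eq_of_le le_rfl hm]; norm_num
  rcases C with ⟨i', k'⟩ | j' | j' | k' | _
  · have hi0' : (0:ℝ) ≤ i'.val := Nat.cast_nonneg _
    have hk2' : (k'.val:ℝ) ≤ 2 := by exact_mod_cast (by omega : k'.val ≤ 2)
    have hk0' : (0:ℝ) ≤ k'.val := Nat.cast_nonneg _
    refine cl_vanish φ i' k' hx hx' ?b1 ?b2 ?b3 ?b4
    case b4 =>
      rcases iso_var (m := m) (k := k.val) (by omega) ((φ i' k').1).isLt with h | h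
      · left; simp only [varStart]; linarith
      · right; simp only [varStart]; linarith
    all_goals rcases iso_clause (m := m) (k := k.val) (by omega) i'.isLt with h | h
    · left; simp only [clauseStart]; linarith
    · right; simp only [clauseStart]; linarith
    · left; simp only [clauseStart]; linarith
    · right; simp only [clauseStart]; linarith
    · left; simp only [clauseStart]; linarith
    · right; simp only [clauseStart]; linarith
  · refine lt_vanish φ j' hx hx' ?_
    rcases iso_var (m := m) (k := k.val) (by omega) j'.isLt with h | h
    · left; simp only [varStart]; linarith
    · right; simp only [varStart]; linarith
  · refine rt_vanish φ j' hx hx' ?_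
    rcases iso_var (m := m) (k := k.val) (by omega) j'.isLt with h | h
    · left; simp only [varStart]; linarith
    · right; simp only [varStart]; linarith
  · by_cases h0 : k'.val = 0
    · by_cases hke : k.val = 1
      · have eg : isoStart m k.val = 12 := by rw [hke, e1]
        refine sep0_vanish hm φ k' h0 hx hx' (Or.inr (by linarith)) (Or.inr (by linarith))
          (Or.inr (by rw [eg] at hx; linarith)) (Or.inl (by rw [eg] at hx'; linarith))
      · have hgap : isoStart m 1 + 7 ≤ isoStart m k.val := isoStart_gap le_rfl (by omega)
        rw [e1] at hgap
        refine sep0_vanish hm φ k' h0 hx hx' (Or.inr (by linarith)) (Or.inr (by linarith))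
          (Or.inr (by linarith)) (Or.inr (by linarith))
    · by_cases h1 : k'.val = m + n - 1
      · exact absurd (Fin.ext (h1.trans hk1.symm) ▸ rfl) hne
      · have h : k'.val < k.val := by omega
        have hgap1 : isoStart m k'.val + 7 ≤ isoStart m k.val := isoStart_gap (by omega) h
        by_cases he : k'.val + 1 = k.val
        · have eg : isoStart m (k'.val + 1) = isoStart m k.val := by rw [he]
          refine sepMid_vanish φ k' h0 h1 hx hx' (Or.inr (by linarith))
            (Or.inr (by rw [eg]; linarith)) (Or.inl (by rw [eg]; linarith))
        · have hgap2 : isoStart m (k'.val + 1) + 7 ≤ isoStart m k.val :=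
            isoStart_gap (by omega) (by omega)
          exact sepMid_vanish φ k' h0 h1 hx hx' (Or.inr (by linarith))
            (Or.inr (by linarith)) (Or.inr (by linarith))
  · exact sep'_vanish φ hx hx' (by right; linarith)

end ZPB

lemma density_zero_on_pb {m n : ℕ} (hm : 1 ≤ m) (hn : 1 ≤ n)
    (φ : Fin m → Fin 3 → Fin n × Bool) (B C : CakeAgent m n) (hne : C ≠ B) {x : ℝ}
    (hx : (pbI m n B).1 ≤ x) (hx' : x ≤ (pbI m n B).2) :
    cakeDensity m n φ C x = 0 := by
  rcases B with ⟨i, k⟩ | j | j | k | _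
  · simp only [pbI] at hx hx'
    exact zpb_cl φ hm hn i k C hne hx hx'
  · simp only [pbI] at hx hx'
    exact zpb_lt φ hm hn j C hne hx hx'
  · simp only [pbI] at hx hx'
    exact zpb_rt φ hm hn j C hne hx hx'
  · simp only [pbI] at hx hx'
    by_cases h0 : k.val = 0
    · rw [if_pos h0] at hx hx'
      exact zpb_sep0 φ hm hn k h0 C hne hx hx'
    · by_cases h1 : k.val = m + n - 1
      · rw [if_neg h0, if_pos h1] at hx hx'
        exact zpb_sepLast φ hm hn k h0 h1 C hne hx hx'
      · rw [if_neg h0, if_neg h1] at hx hx'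
        exact zpb_sepMid φ hm hn k h0 h1 C hne hx hx'
  · simp only [pbI] at hx hx'
    exact zpb_sep' φ hm hn C hne hx hx'

lemma pb_disjoint {m n : ℕ} (hm : 1 ≤ m) (hn : 1 ≤ n)
    (φ : Fin m → Fin 3 → Fin n × Bool) {B B' : CakeAgent m n} (hne : B ≠ B') {x : ℝ}
    (h1 : (pbI m n B).1 ≤ x) (h2 : x ≤ (pbI m n B).2)
    (h1' : (pbI m n B').1 ≤ x) (h2' : x ≤ (pbI m n B').2) : False := by
  have hz := density_zero_on_pb hm hn φ B B' hne.symm h1 h2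
  have hp := pb_le_density m n φ B' x
  have ho := blockInd_one h1' h2'
  rw [hz, ho] at hp
  linarith

/-- In the cake-cutting instance constructed from a 3-SAT formula `φ`
(cake `[0, 12m+7n+3]`, `N = 4m+3n+1` agents), for every `0 ≤ ε ≤ 0.01`, in every
contiguous `ε`-envy-free allocation every agent receives an interval of strictly
positive value according to her own valuation. -/
theorem every_agent_gets_positive_value
    (m n : ℕ) (hm : 0 < m) (hn : 0 < n)
    (φ : Fin m → Fin 3 → Fin n × Bool)
    (ε : ℝ) (hε0 : 0 ≤ ε) (hε : ε ≤ 0.01)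
    (y : Fin (4 * m + 3 * n + 1 + 1) → ℝ) (π : CakeAgent m n ≃ Fin (4 * m + 3 * n + 1))
    (hmono : Monotone y) (hy0 : y 0 = 0)
    (hyL : y (Fin.last (4 * m + 3 * n + 1)) = 12 * m + 7 * n + 3)
    (hEF : ∀ A B : CakeAgent m n,
      cakeVal m n φ A (y (π A).castSucc) (y (π A).succ) ≥
        cakeVal m n φ A (y (π B).castSucc) (y (π B).succ) - ε) :
    ∀ A : CakeAgent m n, 0 < cakeVal m n φ A (y (π A).castSucc) (y (π A).succ) := by
  classical
  intro A
  by_contra hA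
  push_neg at hA
  -- extended cut function
  set Y : ℕ → ℝ := fun j => y ⟨min j (4 * m + 3 * n + 1), by omega⟩ with hYdef
  have hYmono : Monotone Y := fun a b hab => hmono (by
    simp only [Fin.mk_le_mk]
    exact min_le_min hab le_rfl)
  have eY1 : ∀ q : Fin (4 * m + 3 * n + 1), y q.castSucc = Y q.val := by
    intro q
    have h : (⟨min q.val (4 * m + 3 * n + 1), by omega⟩ : Fin (4 * m + 3 * n + 1 + 1)) =
        q.castSucc := Fin.ext (by simp [Nat.min_eq_left (le_of_lt q.isLt)])
    simp only [hYdef, h]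
  have eY2 : ∀ q : Fin (4 * m + 3 * n + 1), y q.succ = Y (q.val + 1) := by
    intro q
    have h : (⟨min (q.val + 1) (4 * m + 3 * n + 1), by omega⟩ :
        Fin (4 * m + 3 * n + 1 + 1)) = q.succ := Fin.ext (by simp [Nat.min_eq_left q.isLt])
    simp only [hYdef, h]
  have hY0 : Y 0 = 0 := by
    have h : (⟨min 0 (4 * m + 3 * n + 1), by omega⟩ : Fin (4 * m + 3 * n + 1 + 1)) = 0 :=
      Fin.ext (by simp)
    simp only [hYdef, h, hy0]
  have hYN : Y (4 * m + 3 * n + 1) = 12 * m + 7 * n + 3 := by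
    have h : (⟨min (4 * m + 3 * n + 1) (4 * m + 3 * n + 1), by omega⟩ :
        Fin (4 * m + 3 * n + 1 + 1)) = Fin.last (4 * m + 3 * n + 1) := Fin.ext (by simp)
    simp only [hYdef, h, hyL]
  -- piece values
  set val : Fin (4 * m + 3 * n + 1) → ℝ :=
    fun r => cakeVal m n φ (π.symm r) (Y r.val) (Y (r.val + 1)) with hvaldef
  have hval_eq : ∀ B : CakeAgent m n,
      cakeVal m n φ B (y (π B).castSucc) (y (π B).succ) = val (π B) := by
    intro B
    rw [eY1, eY2, hvaldef]
    simp only [Equiv.symm_apply_apply]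
  -- the set of pieces with nonpositive value for their owner
  set Z : Finset (Fin (4 * m + 3 * n + 1)) := Finset.univ.filter (fun r => val r ≤ 0) with hZdef
  have hZA : π A ∈ Z := by
    rw [hZdef, Finset.mem_filter]
    exact ⟨Finset.mem_univ _, by rw [← hval_eq]; exact hA⟩
  set ch : Fin (4 * m + 3 * n + 1) → Finset (Fin (4 * m + 3 * n + 1)) :=
    fun r => Finset.univ.filter (fun q =>
      (pbI m n (π.symm r)).1 ≤ Y q.val ∧ Y (q.val + 1) ≤ (pbI m n (π.symm r)).2) with hchdef
  -- children of a member of Z are in Z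
  have hchZ : ∀ r ∈ Z, ch r ⊆ Z := by
    intro r hr q hq
    rw [hchdef, Finset.mem_filter] at hq
    obtain ⟨-, hq1, hq2⟩ := hq
    by_cases hqr : π.symm q = π.symm r
    · rwa [π.symm.injective hqr]
    · rw [hZdef, Finset.mem_filter]
      refine ⟨Finset.mem_univ _, ?_⟩
      have hle : Y q.val ≤ Y (q.val + 1) := hYmono (Nat.le_succ _)
      rw [hvaldef]
      exact le_of_eq (cakeVal_zero_of hle (fun x h1 h2 =>
        density_zero_on_pb hm hn φ (π.symm r) (π.symm q) hqr
          (le_trans hq1 h1) (le_trans h2 hq2)))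
  -- children sets of distinct pieces are disjoint
  have hdisj : ∀ r ∈ Z, ∀ r' ∈ Z, r ≠ r' → Disjoint (ch r) (ch r') := by
    intro r _ r' _ hne
    rw [Finset.disjoint_left]
    intro q hq hq'
    rw [hchdef, Finset.mem_filter] at hq hq'
    obtain ⟨-, hq1, hq2⟩ := hq
    obtain ⟨-, hq1', hq2'⟩ := hq'
    have hle : Y q.val ≤ Y (q.val + 1) := hYmono (Nat.le_succ _)
    exact pb_disjoint hm hn φ (fun h => hne (π.symm.injective h) : π.symm r ≠ π.symm r')
      hq1 (le_trans hle hq2) hq1' (le_trans hle hq2')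
  -- every member of Z has at least two children
  have hcard : ∀ r ∈ Z, 2 ≤ (ch r).card := by
    intro r hr
    rw [hZdef, Finset.mem_filter] at hr
    set B := π.symm r with hBdef
    set s := (pbI m n B).1 with hsdef
    set t := (pbI m n B).2 with htdef
    have hst : 0.2 ≤ t - s := pb_len m n B
    have hs0 : 0 ≤ s := pb_pos m n hm B
    have htL : t ≤ 12 * m + 7 * n + 3 := pb_lt_L m n hm hn B
    -- every piece is worth at most ε to B
    have hpiece : ∀ q : Fin (4 * m + 3 * n + 1),
        cakeVal m n φ B (Y q.val) (Y (q.val + 1)) ≤ ε := by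
      intro q
      have h := hEF B (π.symm q)
      have e : π (π.symm q) = q := Equiv.apply_symm_apply π q
      have e2 : π B = r := by rw [hBdef]; exact Equiv.apply_symm_apply π r
      rw [e, eY1 q, eY2 q, hval_eq B, e2] at h
      linarith [hr.2]
    -- find the cut indices around the private block
    have hbex : ∃ j, t ≤ Y j := ⟨4 * m + 3 * n + 1, by rw [hYN]; exact htL⟩
    set b := Nat.find hbex with hbdef
    have hb1 : t ≤ Y b := Nat.find_spec hbex
    have hb2 : ∀ j, j < b → Y j < t := fun j hj => lt_of_not_ge (Nat.find_min hbex hj)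
    have hbN : b ≤ 4 * m + 3 * n + 1 := Nat.find_min' hbex (by rw [hYN]; exact htL)
    set a := Nat.findGreatest (fun j => Y j ≤ s) b with hadef
    have ha1 : Y a ≤ s :=
      Nat.findGreatest_spec (P := fun j => Y j ≤ s) (Nat.zero_le b)
        (by show Y 0 ≤ s; rw [hY0]; exact hs0)
    have ha2 : ∀ j, a < j → j ≤ b → s < Y j := by
      intro j h1 h2
      exact lt_of_not_ge (Nat.findGreatest_is_greatest h1 h2)
    have hab : a < b := by
      by_contra hc
      push_neg at hc
      have := hYmono hc
      linarith
    -- the value of [Y a, Y b] for B is at least 0.2 and at most (b - a) * ε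
    have hlow : 0.2 ≤ cakeVal m n φ B (Y a) (Y b) := by
      have h1 : cakeVal m n φ B s t ≤ cakeVal m n φ B (Y a) (Y b) :=
        cakeVal_mono ha1 (by linarith) hb1
      have h2 : t - s ≤ cakeVal m n φ B s t :=
        cakeVal_ge_block (by linarith) (pb_le_density m n φ B)
      linarith
    have hsum : ∑ j ∈ Finset.Ico a b, cakeVal m n φ B (Y j) (Y (j + 1)) =
        cakeVal m n φ B (Y a) (Y b) :=
      intervalIntegral.sum_integral_adjacent_intervals_Ico hab.le
        (fun j _ => cakeDensity_intervalIntegrable m n φ B _ _)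
    have hup : cakeVal m n φ B (Y a) (Y b) ≤ (b - a : ℕ) * ε := by
      rw [← hsum]
      have hterm : ∀ j ∈ Finset.Ico a b, cakeVal m n φ B (Y j) (Y (j + 1)) ≤ ε := by
        intro j hj
        rw [Finset.mem_Ico] at hj
        exact hpiece ⟨j, lt_of_lt_of_le hj.2 hbN⟩
      calc ∑ j ∈ Finset.Ico a b, cakeVal m n φ B (Y j) (Y (j + 1))
          ≤ ∑ _j ∈ Finset.Ico a b, ε := Finset.sum_le_sum hterm
        _ = (b - a : ℕ) * ε := by rw [Finset.sum_const, Nat.card_Ico, nsmul_eq_mul]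
    -- hence b - a ≥ 4
    have hba : 4 ≤ b - a := by
      by_contra hc
      push_neg at hc
      have h3 : ((b - a : ℕ) : ℝ) ≤ 3 := by exact_mod_cast (by omega : b - a ≤ 3)
      have h4 : ((b - a : ℕ) : ℝ) * ε ≤ 3 * 0.01 :=
        mul_le_mul h3 hε hε0 (by norm_num)
      linarith
    -- two pieces strictly inside the private block
    have hq1N : a + 1 < 4 * m + 3 * n + 1 := by omega
    have hq2N : a + 2 < 4 * m + 3 * n + 1 := by omega
    have hmem : ∀ (jj : ℕ) (hjN : jj < 4 * m + 3 * n + 1), a < jj → jj + 1 ≤ b - 1 →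
        (⟨jj, hjN⟩ : Fin (4 * m + 3 * n + 1)) ∈ ch r := by
      intro jj hjN hj1 hj2
      rw [hchdef, Finset.mem_filter]
      exact ⟨Finset.mem_univ _, le_of_lt (ha2 jj hj1 (by omega)),
        le_of_lt (hb2 (jj + 1) (by omega))⟩
    have hsub : ({⟨a+1, hq1N⟩, ⟨a+2, hq2N⟩} : Finset (Fin (4 * m + 3 * n + 1))) ⊆ ch r := by
      intro q hq
      rw [Finset.mem_insert, Finset.mem_singleton] at hq
      rcases hq with h | h
      · rw [h]; exact hmem (a+1) hq1N (by omega) (by omega)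
      · rw [h]; exact hmem (a+2) hq2N (by omega) (by omega)
    have h2card : ({⟨a+1, hq1N⟩, ⟨a+2, hq2N⟩} : Finset (Fin (4 * m + 3 * n + 1))).card = 2 := by
      rw [Finset.card_insert_of_notMem (by
        rw [Finset.mem_singleton]
        intro h
        exact absurd (congrArg Fin.val h) (by simp)), Finset.card_singleton]
    calc (2:ℕ) = ({⟨a+1, hq1N⟩, ⟨a+2, hq2N⟩} : Finset (Fin (4 * m + 3 * n + 1))).card :=
        h2card.symm
      _ ≤ (ch r).card := Finset.card_le_card hsub
  -- the counting contradiction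
  have hbu : (Z.biUnion ch).card ≤ Z.card :=
    Finset.card_le_card (Finset.biUnion_subset.2 hchZ)
  have hbu2 : (Z.biUnion ch).card = ∑ r ∈ Z, (ch r).card := Finset.card_biUnion hdisj
  have hsum2 : 2 * Z.card ≤ ∑ r ∈ Z, (ch r).card := by
    calc 2 * Z.card = ∑ _r ∈ Z, 2 := by rw [Finset.sum_const, smul_eq_mul, mul_comm]
      _ ≤ ∑ r ∈ Z, (ch r).card := Finset.sum_le_sum hcard
  have hpos : 0 < Z.card := Finset.card_pos.2 ⟨π A, hZA⟩
  omega
end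

section
/- Given a 3-PARTITION instance (x_1,…,x_{3n}; B), let k = 4B, n' = 4n(k+1), and construct the following discrete instance with m = n(B+1) + 4nk² items and n' agents: from left to right the items consist of n consecutive blocks of B+1 items each — in each block the leftmost item is 'special' and the remaining B items are 'normal' — followed by 4nk² 'dummy' items; the agents are n special agents, the j-th of which values exactly the j-th special item, 4nk dummy agents, each of which values exactly the set of all dummy items, and 3n normal agents, the i-th of which values exactly the leftmost n'·x_i items. Then this instance admits a contiguous proportional allocation if and only if the 3-PARTITION instance has a solution. -/
/-- `owner` is a contiguous allocation of the items `Fin M` (items numbered from left to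
right) to the agents of type `A`: each agent's set of items is a (possibly empty) set of
consecutive items. -/
def ContigAlloc {M : ℕ} {A : Type*} (owner : Fin M → A) : Prop :=
  ∀ (a : A) (t₁ t₂ t₃ : Fin M), t₁ ≤ t₂ → t₂ ≤ t₃ →
    owner t₁ = a → owner t₃ = a → owner t₂ = a

open Classical in
/-- The (normalized) value that agent `a` assigns to the bundle received by agent `b`
under the allocation `owner`, where `V a` is the set of items valued by agent `a`:
`|A_b ∩ V_a| / |V_a|`. -/
noncomputable def discVal {M : ℕ} {A : Type*} (V : A → Finset (Fin M))
    (owner : Fin M → A) (a b : A) : ℝ :=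
  (((V a).filter fun t => owner t = b).card : ℝ) / ((V a).card : ℝ)

/-- The valued sets of the discrete instance built from a 3-PARTITION instance
`(x, B)`: with `k = 4B` and `n' = 4n(k+1)`, the items are `n` blocks of `B+1` items
(a special item followed by `B` normal items) followed by `4nk²` dummy items; the `j`-th
special agent (`Sum.inl`) values exactly the `j`-th special item, each dummy agent
(`Sum.inr (Sum.inl _)`) values exactly the dummy items, and the `i`-th normal agent
(`Sum.inr (Sum.inr i)`) values exactly the leftmost `n' * x i` items. -/
def partitionV (n B : ℕ) (x : Fin (3 * n) → ℕ) :
    (Fin n ⊕ Fin (4 * n * (4 * B)) ⊕ Fin (3 * n)) →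
      Finset (Fin (n * (B + 1) + 4 * n * (4 * B) ^ 2))
  | .inl s => Finset.univ.filter fun j => j.val = s.val * (B + 1)
  | .inr (.inl _) => Finset.univ.filter fun j => n * (B + 1) ≤ j.val
  | .inr (.inr i) => Finset.univ.filter fun j => j.val < 4 * n * (4 * B + 1) * x i

/-!
In a proportional allocation every agent needs at least a `1/n'` fraction of the items she
values. So the `j`-th special agent must receive the `j`-th special item, and each of the
`4nk` dummy agents at least `k²/(k+1) > k - 1`, i.e. `k`, of the `4nk²` dummy items; hence the
dummy agents own all dummy items between them, and the `i`-th normal agent, who needs `x_i`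
items, finds them among the normal items of the blocks. Her bundle is an interval that avoids
the special items, so it lies inside one block; as the `B` normal items of a block cannot serve
more than `B` units of demand and `∑ x_i = nB`, each block is used up exactly, and
`B/4 < x_i < B/2` forces three agents per block. Conversely, a 3-partition is realised by
laying out, in every block, the special item followed by the bundles of its three normal
agents, and then cutting the dummy items into `4nk` runs of `k`.
-/

open Finset Function

section Counting

variable {ι α β : Type*} [DecidableEq α]

theorem sum_card_filter_comp_eq (S : Finset ι) (o : ι → α) {f : β → α} (hf : Injective f)
    (F : Finset β) :
    ∑ b ∈ F, #{j ∈ S | o j = f b} = #{j ∈ S | o j ∈ F.map ⟨f, hf⟩} := by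
  rw [← sum_card_fiberwise_eq_card_filter, sum_map]
  rfl

theorem sum_card_filter_comp_le (S : Finset ι) (o : ι → α) {f : β → α} (hf : Injective f)
    (F : Finset β) : ∑ b ∈ F, #{j ∈ S | o j = f b} ≤ #S :=
  (sum_card_filter_comp_eq S o hf F).trans_le (card_filter_le _ _)

theorem exists_comp_eq_of_card_le_sum [Fintype β] {S : Finset ι} {o : ι → α} {f : β → α}
    (hf : Injective f) (h : #S ≤ ∑ b, #{j ∈ S | o j = f b}) {j : ι} (hj : j ∈ S) :
    ∃ b, o j = f b := by
  rw [sum_card_filter_comp_eq S o hf] at h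
  obtain ⟨b, -, hb⟩ := mem_map.1 (filter_card_eq (le_antisymm (card_filter_le _ _) h) j hj)
  exact ⟨b, hb.symm⟩

end Counting

theorem mul_add_le_mul_of_lt {u v : ℕ} (c : ℕ) (h : u < v) : u * c + c ≤ v * c :=
  (Nat.succ_mul u c).symm.trans_le (Nat.mul_le_mul_right c h)

theorem Fin.card_filter_val_mem {M : ℕ} (S : Finset ℕ) (hS : ∀ m ∈ S, m < M) :
    #{j : Fin M | (j : ℕ) ∈ S} = #S := by
  rw [← card_attachFin S hS]
  congr 1
  ext j
  simp [mem_attachFin]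

theorem Fin.card_filter_div_eq_not_dvd_le {M c : ℕ} (hc : 0 < c) (t : ℕ) :
    #{j : Fin M | (j : ℕ) / c = t ∧ ¬ c ∣ j} ≤ c - 1 := by
  calc #{j : Fin M | (j : ℕ) / c = t ∧ ¬ c ∣ j} ≤ #((range c).erase 0) := by
        refine card_le_card_of_injOn (fun j => (j : ℕ) % c) (fun j hj => ?_)
          fun j hj j' hj' h => ?_
        · simp only [coe_filter, mem_univ, true_and, Set.mem_ofPred_eq,
            Nat.dvd_iff_mod_eq_zero] at hj
          simp [hj.2, Nat.mod_lt _ hc]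
        · simp only [coe_filter, mem_univ, true_and, Set.mem_ofPred_eq] at hj hj'
          have hdiv : (j : ℕ) / c = j' / c := hj.1.trans hj'.1.symm
          have hmod : (j : ℕ) % c = j' % c := h
          exact Fin.ext (by rw [← Nat.div_add_mod j c, ← Nat.div_add_mod j' c, hdiv, hmod])
    _ = c - 1 := by simp [hc]

theorem sum_filter_lt_add_le_sum_filter_lt {ι M : Type*} [AddCommMonoid M] [PartialOrder M]
    [CanonicallyOrderedAdd M] [LinearOrder ι] (F : Finset ι) (x : ι → M) {i i' : ι}
    (hi : i ∈ F) (h : i < i') :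
    ∑ j ∈ F with j < i, x j + x i ≤ ∑ j ∈ F with j < i', x j := by
  rw [add_comm, ← sum_insert (by simp)]
  refine sum_le_sum_of_subset fun j hj => ?_
  simp only [mem_insert, mem_filter] at hj ⊢
  rcases hj with rfl | ⟨hj, hji⟩
  exacts [⟨hi, h⟩, ⟨hj, hji.trans h⟩]

theorem sum_filter_lt_add_le_sum {ι M : Type*} [AddCommMonoid M] [PartialOrder M]
    [CanonicallyOrderedAdd M] [LinearOrder ι] (F : Finset ι) (x : ι → M) {i : ι}
    (hi : i ∈ F) : ∑ j ∈ F with j < i, x j + x i ≤ ∑ j ∈ F, x j := by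
  rw [add_comm, ← sum_insert (by simp)]
  exact sum_le_sum_of_subset (insert_subset hi (filter_subset _ _))

def blockOffset {ι κ : Type*} [Fintype ι] [LinearOrder ι] [DecidableEq κ] (x : ι → ℕ)
    (p : ι → κ) (i : ι) : ℕ :=
  ∑ j ∈ {j | p j = p i} with j < i, x j

theorem card_eq_three_of_sum_eq {ι : Type*} {s : Finset ι} {x : ι → ℕ} {B : ℕ} (hB : 0 < B)
    (hlb : ∀ i ∈ s, B < 4 * x i) (hub : ∀ i ∈ s, 2 * x i < B) (hs : ∑ i ∈ s, x i = B) :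
    #s = 3 := by
  have hne : s.Nonempty := nonempty_of_sum_ne_zero (hs.trans_ne hB.ne')
  have hlt4 : #s * B < 4 * B := by
    calc #s * B = ∑ _ ∈ s, B := by simp
      _ < ∑ i ∈ s, 4 * x i := sum_lt_sum_of_nonempty hne hlb
      _ = 4 * B := by rw [← mul_sum, hs]
  have hgt2 : 2 * B < #s * B := by
    calc 2 * B = ∑ i ∈ s, 2 * x i := by rw [← mul_sum, hs]
      _ < ∑ _ ∈ s, B := sum_lt_sum_of_nonempty hne hub
      _ = #s * B := by simp
  have := Nat.lt_of_mul_lt_mul_right hlt4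
  have := Nat.lt_of_mul_lt_mul_right hgt2
  omega

theorem existsUnique_mem_Ico_of_sum_eq {A : Type*} [Fintype A] {M : ℕ} (s ℓ : A → ℕ)
    (hsep : Pairwise fun a b => s a + ℓ a ≤ s b ∨ s b + ℓ b ≤ s a)
    (hle : ∀ a, s a + ℓ a ≤ M) (hsum : ∑ a, ℓ a = M) {j : ℕ} (hj : j < M) :
    ∃! a, j ∈ Ico (s a) (s a + ℓ a) := by
  classical
  have hdisj : ((univ : Finset A) : Set A).PairwiseDisjoint fun a => Ico (s a) (s a + ℓ a) :=
    fun a _ b _ hab => disjoint_left.2 fun k hka hkb => by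
      simp only [mem_Ico] at hka hkb
      have := hsep hab
      omega
  have hcover : univ.biUnion (fun a => Ico (s a) (s a + ℓ a)) = range M := by
    refine eq_of_subset_of_card_le (fun k hk => ?_) ?_
    · obtain ⟨a, -, hk⟩ := mem_biUnion.1 hk
      have := hle a
      simp only [mem_Ico, mem_range] at hk ⊢
      omega
    · simp [card_biUnion hdisj, hsum]
  obtain ⟨a, -, ha⟩ := mem_biUnion.1 (hcover ▸ mem_range.2 hj)
  refine ⟨a, ha, fun b hb => by_contra fun hba => ?_⟩
  exact disjoint_left.1 (hdisj (mem_univ b) (mem_univ a) hba) hb ha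

theorem exists_contigAlloc_of_existsUnique {A : Type*} {M : ℕ} (s e : A → ℕ)
    (h : ∀ j < M, ∃! a, j ∈ Ico (s a) (e a)) :
    ∃ o : Fin M → A, ContigAlloc o ∧ ∀ j a, o j = a ↔ (j : ℕ) ∈ Ico (s a) (e a) := by
  choose o ho hunique using fun j : Fin M => h j j.2
  have hiff : ∀ j a, o j = a ↔ (j : ℕ) ∈ Ico (s a) (e a) :=
    fun j a => ⟨fun hja => hja ▸ ho j, fun hj => (hunique j a hj).symm⟩
  refine ⟨o, fun a t₁ t₂ t₃ h₁₂ h₂₃ h₁ h₃ => ?_, hiff⟩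
  rw [hiff] at h₁ h₃ ⊢
  simp only [mem_Ico, Fin.le_def] at h₁ h₃ h₁₂ h₂₃ ⊢
  omega

theorem ContigAlloc.div_eq_div {A : Type*} {M c : ℕ} {o : Fin M → A} (ho : ContigAlloc o)
    {a : A} (hsep : ∀ j, o j = a → ¬ c ∣ (j : ℕ)) {j j' : Fin M} (hj : o j = a)
    (hj' : o j' = a) : (j : ℕ) / c = j' / c := by
  wlog hle : j ≤ j' generalizing j j'
  · exact (this hj' hj (le_of_not_ge hle)).symm
  rcases Nat.eq_zero_or_pos c with rfl | hc
  · simp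
  -- otherwise the multiple `c * (j / c + 1)` of `c` lies between `j` and `j'`
  by_contra hne
  have hlt : (j : ℕ) / c < j' / c := (Nat.div_le_div_right hle).lt_of_ne hne
  have hmj : (j : ℕ) < c * (j / c + 1) := Nat.lt_mul_div_succ j hc
  have hmj' : c * (j / c + 1) ≤ j' :=
    (Nat.mul_le_mul_left c hlt).trans (Nat.mul_div_le j' c)
  let m : Fin M := ⟨c * (j / c + 1), by omega⟩
  exact hsep m (ho a j m j' hmj.le hmj' hj hj') (Dvd.intro _ rfl)

theorem inv_le_discVal_iff {A : Type*} [DecidableEq A] {M N : ℕ} {V : A → Finset (Fin M)}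
    {o : Fin M → A} {a : A} (hN : 0 < N) (hV : (V a).Nonempty) :
    1 / (N : ℝ) ≤ discVal V o a a ↔ #(V a) ≤ N * #{t ∈ V a | o t = a} := by
  rw [discVal, div_le_div_iff₀ (by positivity) (by simpa using hV), one_mul, mul_comm]
  norm_cast
  convert Iff.rfl

abbrev PartitionItem (n B : ℕ) : Type := Fin (n * (B + 1) + 4 * n * (4 * B) ^ 2)

abbrev PartitionAgent (n B : ℕ) : Type := Fin n ⊕ Fin (4 * n * (4 * B)) ⊕ Fin (3 * n)

theorem card_partitionAgent (n B : ℕ) :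
    Fintype.card (PartitionAgent n B) = 4 * n * (4 * B + 1) := by
  simp only [Fintype.card_sum, Fintype.card_fin]
  ring

section PartitionInstance

variable {n B : ℕ} {x : Fin (3 * n) → ℕ}

def specialItem (B : ℕ) (s : Fin n) : PartitionItem n B :=
  ⟨s * (B + 1), by nlinarith [s.2]⟩

theorem card_partitionV_inl (s : Fin n) : #(partitionV n B x (.inl s)) = 1 := by
  rw [card_eq_one]
  refine ⟨specialItem B s, ?_⟩
  ext j
  simp [partitionV, specialItem, Fin.ext_iff]

theorem pos_of_dummy (d : Fin (4 * n * (4 * B))) : 0 < n ∧ 0 < B := by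
  have := d.pos
  constructor <;> refine Nat.pos_of_ne_zero fun h => ?_ <;> simp [h] at this

def dummyItems (n B : ℕ) : Finset (PartitionItem n B) := {j | n * (B + 1) ≤ (j : ℕ)}

theorem partitionV_dummy (d : Fin (4 * n * (4 * B))) :
    partitionV n B x (.inr (.inl d)) = dummyItems n B := rfl

theorem card_dummyItems : #(dummyItems n B) = 4 * n * (4 * B) ^ 2 := by
  have := Fin.card_filter_val_mem (M := n * (B + 1) + 4 * n * (4 * B) ^ 2)
    (Ico (n * (B + 1)) (n * (B + 1) + 4 * n * (4 * B) ^ 2)) (fun m hm => (mem_Ico.1 hm).2)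
  simp only [mem_Ico, Fin.is_lt, and_true, Nat.card_Ico, add_tsub_cancel_left] at this
  exact this

theorem mul_le_card_partitionItem (hub : ∀ i, 2 * x i < B) (i : Fin (3 * n)) :
    4 * n * (4 * B + 1) * x i ≤ n * (B + 1) + 4 * n * (4 * B) ^ 2 := by
  have h := Nat.mul_le_mul_left (2 * n * (4 * B + 1)) (hub i).le
  nlinarith [Nat.zero_le (n * B)]

theorem card_partitionV_normal (hub : ∀ i, 2 * x i < B) (i : Fin (3 * n)) :
    #(partitionV n B x (.inr (.inr i))) = 4 * n * (4 * B + 1) * x i := by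
  have := Fin.card_filter_val_mem (M := n * (B + 1) + 4 * n * (4 * B) ^ 2)
    (range (4 * n * (4 * B + 1) * x i))
    (fun m hm => (mem_range.1 hm).trans_le (mul_le_card_partitionItem hub i))
  simp only [mem_range, card_range] at this
  exact this

/-- Proportionality with the denominators cleared (`4n(4B+1)` is the number of agents). -/
def PartitionProportional (x : Fin (3 * n) → ℕ) (o : PartitionItem n B → PartitionAgent n B) :
    Prop :=
  ∀ a, #(partitionV n B x a) ≤ 4 * n * (4 * B + 1) * #{j ∈ partitionV n B x a | o j = a}

theorem partitionV_nonempty (hlb : ∀ i, B < 4 * x i) (hub : ∀ i, 2 * x i < B)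
    (a : PartitionAgent n B) : (partitionV n B x a).Nonempty := by
  rw [← card_pos]
  rcases a with s | d | i
  · simp [card_partitionV_inl]
  · obtain ⟨hn, hB⟩ := pos_of_dummy d
    rw [partitionV_dummy, card_dummyItems]
    exact Nat.mul_pos (by omega) (pow_pos (by omega) 2)
  · have : 0 < 3 * n := i.pos
    rw [card_partitionV_normal hub]
    exact Nat.mul_pos (Nat.mul_pos (by omega) (by omega)) (by have := hlb i; omega)

theorem inv_le_discVal_partitionV_iff (hlb : ∀ i, B < 4 * x i) (hub : ∀ i, 2 * x i < B)
    (o : PartitionItem n B → PartitionAgent n B) (a : PartitionAgent n B) :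
    1 / (Fintype.card (PartitionAgent n B) : ℝ) ≤ discVal (partitionV n B x) o a a ↔
      #(partitionV n B x a) ≤ 4 * n * (4 * B + 1) * #{j ∈ partitionV n B x a | o j = a} := by
  rw [inv_le_discVal_iff (Fintype.card_pos_iff.2 ⟨a⟩) (partitionV_nonempty hlb hub a),
    card_partitionAgent]

namespace PartitionProportional

variable {o : PartitionItem n B → PartitionAgent n B}

theorem owner_specialItem (h : PartitionProportional x o) (s : Fin n) :
    o (specialItem B s) = .inl s := by
  have hpos : 0 < #{j ∈ partitionV n B x (.inl s) | o j = .inl s} := by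
    have := h (.inl s)
    rw [card_partitionV_inl] at this
    exact Nat.pos_of_ne_zero fun h0 => by simp [h0] at this
  obtain ⟨j, hj⟩ := card_pos.1 hpos
  simp only [partitionV, mem_filter, mem_univ, true_and] at hj
  rw [show specialItem B s = j from Fin.ext hj.1.symm]
  exact hj.2

theorem exists_owner_dummy (h : PartitionProportional x o) {j : PartitionItem n B}
    (hj : n * (B + 1) ≤ j) : ∃ d, o j = .inr (.inl d) := by
  have hD : ∀ d, 4 * B ≤ #{j ∈ dummyItems n B | o j = .inr (.inl d)} := by
    intro d
    have hn : 0 < 4 * n := by have := (pos_of_dummy d).1; omega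
    have hd := h (.inr (.inl d))
    rw [partitionV_dummy, card_dummyItems] at hd
    have : (4 * B) ^ 2 ≤ (4 * B + 1) * #{j ∈ dummyItems n B | o j = .inr (.inl d)} :=
      Nat.le_of_mul_le_mul_left (by rwa [← mul_assoc]) hn
    nlinarith
  refine exists_comp_eq_of_card_le_sum (S := dummyItems n B)
    (Sum.inr_injective.comp Sum.inl_injective) ?_
    (by simpa [dummyItems] using hj)
  calc #(dummyItems n B) = #(univ : Finset (Fin (4 * n * (4 * B)))) • (4 * B) := by
        simp only [card_dummyItems, card_univ, Fintype.card_fin, smul_eq_mul]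
        ring
    _ ≤ _ := card_nsmul_le_sum _ _ _ fun d _ => hD d

theorem le_card_owner_normal (hub : ∀ i, 2 * x i < B) (h : PartitionProportional x o)
    (i : Fin (3 * n)) : x i ≤ #{j | o j = .inr (.inr i)} := by
  have hN : 0 < 4 * n * (4 * B + 1) := Nat.mul_pos (by have := i.pos; omega) (by omega)
  have hi := h (.inr (.inr i))
  rw [card_partitionV_normal hub, mul_comm _ (x i)] at hi
  exact (Nat.le_of_mul_le_mul_left (by rwa [mul_comm]) hN).trans
    (card_le_card (filter_subset_filter _ (subset_univ _)))

theorem lt_of_owner_normal (h : PartitionProportional x o) {i : Fin (3 * n)}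
    {j : PartitionItem n B} (hj : o j = .inr (.inr i)) : (j : ℕ) < n * (B + 1) := by
  by_contra hlt
  obtain ⟨d, hd⟩ := h.exists_owner_dummy (not_lt.1 hlt)
  simp [hd] at hj

theorem not_dvd_of_owner_normal (h : PartitionProportional x o) {i : Fin (3 * n)}
    {j : PartitionItem n B} (hj : o j = .inr (.inr i)) : ¬ (B + 1) ∣ j := by
  rintro ⟨s, hs⟩
  have hsn : s < n := by
    have := h.lt_of_owner_normal hj
    rw [hs, mul_comm] at this
    exact Nat.lt_of_mul_lt_mul_right this
  have : j = specialItem B ⟨s, hsn⟩ := Fin.ext (by rw [hs, mul_comm]; rfl)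
  rw [this, h.owner_specialItem] at hj
  simp at hj

theorem sum_le_of_div_eq (hub : ∀ i, 2 * x i < B) (h : PartitionProportional x o)
    {p : Fin (3 * n) → Fin n} (hp : ∀ i j, o j = .inr (.inr i) → (j : ℕ) / (B + 1) = p i)
    (t : Fin n) : ∑ i ∈ {i | p i = t}, x i ≤ B := by
  set normalItems : Finset (PartitionItem n B) := {j | (j : ℕ) / (B + 1) = t ∧ ¬ (B + 1) ∣ j}
  calc ∑ i ∈ {i | p i = t}, x i
      ≤ ∑ i ∈ {i | p i = t}, #{j ∈ normalItems | o j = .inr (.inr i)} := by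
        refine sum_le_sum fun i hi => (h.le_card_owner_normal hub i).trans_eq (congrArg card ?_)
        ext j
        simp only [mem_filter, mem_univ, true_and, normalItems] at hi ⊢
        refine ⟨fun hj => ⟨⟨?_, h.not_dvd_of_owner_normal hj⟩, hj⟩, And.right⟩
        exact (hp i j hj).trans (congrArg Fin.val hi)
    _ ≤ #normalItems :=
        sum_card_filter_comp_le _ _ (Sum.inr_injective.comp Sum.inr_injective) _
    _ ≤ B := Fin.card_filter_div_eq_not_dvd_le B.succ_pos t

theorem exists_sum_eq (hsum : ∑ i, x i = n * B) (hlb : ∀ i, B < 4 * x i)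
    (hub : ∀ i, 2 * x i < B) (ho : ContigAlloc o) (h : PartitionProportional x o) :
    ∃ p : Fin (3 * n) → Fin n, ∀ t, ∑ i ∈ {i | p i = t}, x i = B := by
  have hown : ∀ i, ∃ j, o j = .inr (.inr i) := fun i => by
    obtain ⟨j, hj⟩ := card_pos.1 ((Nat.pos_of_ne_zero (by have := hlb i; omega)).trans_le
      (h.le_card_owner_normal hub i))
    exact ⟨j, (mem_filter.1 hj).2⟩
  choose w hw using hown
  let p : Fin (3 * n) → Fin n := fun i =>
    ⟨(w i : ℕ) / (B + 1), (Nat.div_lt_iff_lt_mul B.succ_pos).2 (h.lt_of_owner_normal (hw i))⟩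
  have hle := h.sum_le_of_div_eq hub (p := p) fun i j hj =>
    ho.div_eq_div (fun j hj => h.not_dvd_of_owner_normal hj) hj (hw i)
  have htotal : ∑ t, ∑ i ∈ {i | p i = t}, x i = ∑ _ : Fin n, B := by
    rw [sum_fiberwise, hsum]
    simp
  exact ⟨p, fun t => (sum_eq_sum_iff_of_le fun t _ => hle t).1 htotal t (mem_univ t)⟩

end PartitionProportional

variable {p : Fin (3 * n) → Fin n}

theorem blockOffset_add_le (hp : ∀ t, ∑ i ∈ {i | p i = t}, x i = B) (i : Fin (3 * n)) :
    blockOffset x p i + x i ≤ B :=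
  (sum_filter_lt_add_le_sum _ x (by simp)).trans_eq (hp (p i))

theorem blockOffset_add_le_blockOffset {i i' : Fin (3 * n)} (hpi : p i = p i') (h : i < i') :
    blockOffset x p i + x i ≤ blockOffset x p i' := by
  rw [blockOffset, blockOffset, hpi]
  exact sum_filter_lt_add_le_sum_filter_lt _ x (by simp [hpi]) h

variable (x p) in
def partitionStart : PartitionAgent n B → ℕ
  | .inl s => s * (B + 1)
  | .inr (.inl d) => n * (B + 1) + d * (4 * B)
  | .inr (.inr i) => p i * (B + 1) + 1 + blockOffset x p i

variable (x) in
def partitionLength : PartitionAgent n B → ℕ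
  | .inl _ => 1
  | .inr (.inl _) => 4 * B
  | .inr (.inr i) => x i

theorem partitionLayout_pairwise (hp : ∀ t, ∑ i ∈ {i | p i = t}, x i = B) :
    Pairwise fun a b : PartitionAgent n B =>
      partitionStart x p a + partitionLength x a ≤ partitionStart x p b ∨
        partitionStart x p b + partitionLength x b ≤ partitionStart x p a := by
  have hoff := blockOffset_add_le hp
  rintro (s | d | i) (s' | d' | i') hne <;> simp only [partitionStart, partitionLength]
  · rcases (Fin.val_ne_of_ne fun h => hne (congrArg _ h)).lt_or_gt with h | h <;>
      have := mul_add_le_mul_of_lt (B + 1) h <;> omega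
  · have := mul_add_le_mul_of_lt (B + 1) s.2; omega
  · have := hoff i'
    rcases lt_trichotomy (s : ℕ) (p i') with h | h | h
    · have := mul_add_le_mul_of_lt (B + 1) h; omega
    · rw [h]; omega
    · have := mul_add_le_mul_of_lt (B + 1) h; omega
  · have := mul_add_le_mul_of_lt (B + 1) s'.2; omega
  · rcases (Fin.val_ne_of_ne fun h => hne (congrArg _ (congrArg _ h))).lt_or_gt with h | h <;>
      have := mul_add_le_mul_of_lt (4 * B) h <;> omega
  · have := hoff i'; have := mul_add_le_mul_of_lt (B + 1) (p i').2; omega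
  · have := hoff i
    rcases lt_trichotomy (s' : ℕ) (p i) with h | h | h
    · have := mul_add_le_mul_of_lt (B + 1) h; omega
    · rw [h]; omega
    · have := mul_add_le_mul_of_lt (B + 1) h; omega
  · have := hoff i; have := mul_add_le_mul_of_lt (B + 1) (p i).2; omega
  · have hii' : i ≠ i' := fun h => hne (by rw [h])
    by_cases hpi : p i = p i'
    · rw [hpi]
      rcases hii'.lt_or_gt with h | h
      · have := blockOffset_add_le_blockOffset (x := x) hpi h; omega
      · have := blockOffset_add_le_blockOffset (x := x) hpi.symm h; omega
    · have := hoff i; have := hoff i'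
      rcases (Fin.val_ne_of_ne hpi).lt_or_gt with h | h <;>
        have := mul_add_le_mul_of_lt (B + 1) h <;> omega

theorem partitionStart_normal_add_le (hp : ∀ t, ∑ i ∈ {i | p i = t}, x i = B)
    (i : Fin (3 * n)) :
    partitionStart x p (.inr (.inr i) : PartitionAgent n B) + x i ≤ n * (B + 1) := by
  have := mul_add_le_mul_of_lt (B + 1) (p i).2
  have := blockOffset_add_le hp i
  simp only [partitionStart]
  omega

theorem partitionLayout_le (hp : ∀ t, ∑ i ∈ {i | p i = t}, x i = B) (a : PartitionAgent n B) :
    partitionStart x p a + partitionLength x a ≤ n * (B + 1) + 4 * n * (4 * B) ^ 2 := by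
  rcases a with s | d | i
  · have := mul_add_le_mul_of_lt (B + 1) s.2
    simp only [partitionStart, partitionLength]
    omega
  · have := mul_add_le_mul_of_lt (4 * B) d.2
    simp only [partitionStart, partitionLength]
    nlinarith
  · have := partitionStart_normal_add_le hp i
    simp only [partitionLength]
    omega

theorem sum_partitionLength (hp : ∀ t, ∑ i ∈ {i | p i = t}, x i = B) :
    ∑ a : PartitionAgent n B, partitionLength x a = n * (B + 1) + 4 * n * (4 * B) ^ 2 := by
  have hx : ∑ i, x i = n * B := by
    rw [← sum_fiberwise univ p x]
    simp [hp]
  simp only [Fintype.sum_sum_type, partitionLength, sum_const, card_univ, Fintype.card_fin,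
    smul_eq_mul, hx]
  ring

theorem mem_partitionV_of_mem_Ico (hlb : ∀ i, B < 4 * x i)
    (hp : ∀ t, ∑ i ∈ {i | p i = t}, x i = B) {a : PartitionAgent n B} {j : PartitionItem n B}
    (hj : (j : ℕ) ∈ Ico (partitionStart x p a) (partitionStart x p a + partitionLength x a)) :
    j ∈ partitionV n B x a := by
  rw [mem_Ico] at hj
  rcases a with s | d | i
  · simp only [partitionStart, partitionLength] at hj
    simp only [partitionV, mem_filter, mem_univ, true_and]
    omega
  · simp only [partitionStart, partitionLength] at hj
    simp only [partitionV, mem_filter, mem_univ, true_and]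
    omega
  · have hstart := partitionStart_normal_add_le hp i
    simp only [partitionStart, partitionLength] at hj hstart
    simp only [partitionV, mem_filter, mem_univ, true_and]
    calc (j : ℕ) < n * (B + 1) := by omega
      _ ≤ n * (4 * x i) := Nat.mul_le_mul_left n (hlb i)
      _ ≤ 4 * n * (4 * B + 1) * x i := by nlinarith [Nat.zero_le (n * x i * B)]

theorem card_partitionV_le_mul_partitionLength (hub : ∀ i, 2 * x i < B)
    (a : PartitionAgent n B) :
    #(partitionV n B x a) ≤ 4 * n * (4 * B + 1) * partitionLength x a := by
  rcases a with s | d | i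
  · rw [card_partitionV_inl, partitionLength, mul_one]
    exact Nat.mul_pos (Nat.mul_pos four_pos s.pos) (Nat.succ_pos _)
  · rw [partitionV_dummy, card_dummyItems, partitionLength]
    nlinarith
  · rw [card_partitionV_normal hub, partitionLength]

theorem exists_partitionProportional (hlb : ∀ i, B < 4 * x i) (hub : ∀ i, 2 * x i < B)
    (hp : ∀ t, ∑ i ∈ {i | p i = t}, x i = B) :
    ∃ o : PartitionItem n B → PartitionAgent n B,
      ContigAlloc o ∧ PartitionProportional x o := by
  obtain ⟨o, ho, hiff⟩ := exists_contigAlloc_of_existsUnique (partitionStart x p)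
    (fun a => partitionStart x p a + partitionLength x a) fun j hj =>
      existsUnique_mem_Ico_of_sum_eq _ _ (partitionLayout_pairwise hp) (partitionLayout_le hp)
        (sum_partitionLength hp) hj
  refine ⟨o, ho, fun a => ?_⟩
  have hIco := Fin.card_filter_val_mem (M := n * (B + 1) + 4 * n * (4 * B) ^ 2)
    (Ico (partitionStart x p a) (partitionStart x p a + partitionLength x a))
    fun m hm => (mem_Ico.1 hm).2.trans_le (partitionLayout_le hp a)
  rw [Nat.card_Ico, add_tsub_cancel_left] at hIco
  have hbundle : #{j ∈ partitionV n B x a | o j = a} = partitionLength x a := by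
    rw [← hIco]
    congr 1
    ext j
    simp only [mem_filter, mem_univ, true_and, ← hiff]
    exact ⟨And.right, fun hj => ⟨mem_partitionV_of_mem_Ico hlb hp ((hiff j a).1 hj), hj⟩⟩
  rw [hbundle]
  exact card_partitionV_le_mul_partitionLength hub a

end PartitionInstance

theorem contiguous_proportional_iff_three_partition_general
    (n B : ℕ) (x : Fin (3 * n) → ℕ)
    (hsum : ∑ i, x i = n * B)
    (hlb : ∀ i, B < 4 * x i) (hub : ∀ i, 2 * x i < B) :
    (∃ owner : Fin (n * (B + 1) + 4 * n * (4 * B) ^ 2) →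
        (Fin n ⊕ Fin (4 * n * (4 * B)) ⊕ Fin (3 * n)),
      ContigAlloc owner ∧
      ∀ a, discVal (partitionV n B x) owner a a ≥
        1 / (Fintype.card (Fin n ⊕ Fin (4 * n * (4 * B)) ⊕ Fin (3 * n)) : ℝ)) ↔
    (∃ p : Fin (3 * n) → Fin n, ∀ t : Fin n,
      (Finset.univ.filter fun i => p i = t).card = 3 ∧
      ∑ i ∈ Finset.univ.filter (fun i => p i = t), x i = B) := by
  simp_rw [ge_iff_le, inv_le_discVal_partitionV_iff hlb hub]
  constructor
  · rintro ⟨o, ho, hprop⟩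
    obtain ⟨p, hp⟩ := PartitionProportional.exists_sum_eq hsum hlb hub ho hprop
    refine ⟨p, fun t => ⟨?_, hp t⟩⟩
    have hB : 0 < B := (Nat.zero_le _).trans_lt (hub ⟨0, by have := t.pos; omega⟩)
    exact card_eq_three_of_sum_eq hB (fun i _ => hlb i) (fun i _ => hub i) (hp t)
  · rintro ⟨p, hp⟩
    exact exists_partitionProportional hlb hub fun t => (hp t).2

/-- The discrete instance constructed from a 3-PARTITION instance
`(x; B)` admits a contiguous proportional allocation if and only if the 3-PARTITION
instance has a solution. -/
theorem contiguous_proportional_iff_three_partition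
    (n B : ℕ) (hn : 0 < n) (x : Fin (3 * n) → ℕ)
    (hpos : ∀ i, 0 < x i) (hsum : ∑ i, x i = n * B)
    (hlb : ∀ i, B < 4 * x i) (hub : ∀ i, 2 * x i < B) :
    (∃ owner : Fin (n * (B + 1) + 4 * n * (4 * B) ^ 2) →
        (Fin n ⊕ Fin (4 * n * (4 * B)) ⊕ Fin (3 * n)),
      ContigAlloc owner ∧
      ∀ a, discVal (partitionV n B x) owner a a ≥
        1 / (Fintype.card (Fin n ⊕ Fin (4 * n * (4 * B)) ⊕ Fin (3 * n)) : ℝ)) ↔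
    (∃ p : Fin (3 * n) → Fin n, ∀ t : Fin n,
      (Finset.univ.filter fun i => p i = t).card = 3 ∧
      ∑ i ∈ Finset.univ.filter (fun i => p i = t), x i = B) :=
  contiguous_proportional_iff_three_partition_general n B x hsum hlb hub
end

section
/- Let φ be a 3-SAT formula and let R be the discrete instance constructed from φ as described. If R admits a partial contiguous allocation — pairwise disjoint sets of consecutive items, one per agent, not necessarily covering all items — in which every agent receives at least two items she values, then φ is satisfiable. -/
/-- Agents of the discrete instance `R` built from `φ`: clause agents `C_i^k = Sum.inl (i,k)`
and variable agents `X_j = Sum.inr (j, true)`, `X̄_j = Sum.inr (j, false)`. -/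
abbrev RAgent (m n : ℕ) := (Fin m × Fin 3) ⊕ (Fin n × Bool)

/-- Number of clause-literal occurrences of the positive literal `x_j` in `φ`. -/
def posOcc (m n : ℕ) (φ : Fin m → Fin 3 → Fin n × Bool) (j : Fin n) : ℕ :=
  (Finset.univ.filter fun p : Fin m × Fin 3 => φ p.1 p.2 = (j, true)).card

/-- Number of clause-literal occurrences of the variable `x_j` (positive or negative). -/
def occCount (m n : ℕ) (φ : Fin m → Fin 3 → Fin n × Bool) (j : Fin n) : ℕ :=
  (Finset.univ.filter fun p : Fin m × Fin 3 => (φ p.1 p.2).1 = j).card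

/-- Item index at which the Variable-Gadget of variable `x_j` starts (the Variable-Gadget
of `x_j` has `5 + 2 * occCount` items and the gadgets follow the `4m` clause items). -/
def varStartR (m n : ℕ) (φ : Fin m → Fin 3 → Fin n × Bool) (j : Fin n) : ℕ :=
  4 * m + ∑ j' ∈ Finset.univ.filter (fun j' : Fin n => j' < j), (5 + 2 * occCount m n φ j')

/-- Rank (from the left) of the clause-literal occurrence `p` among the occurrences of the
same literal, ordering occurrences by clause index and then literal position. -/
def litRank (m n : ℕ) (φ : Fin m → Fin 3 → Fin n × Bool) (p : Fin m × Fin 3) : ℕ :=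
  (Finset.univ.filter fun p' : Fin m × Fin 3 =>
    φ p'.1 p'.2 = φ p.1 p.2 ∧ 3 * p'.1.val + p'.2.val < 3 * p.1.val + p.2.val).card

/-- Index of the first of the two items valued only by the clause agent `p` inside the
Variable-Gadget of its literal's variable. -/
def pairStart (m n : ℕ) (φ : Fin m → Fin 3 → Fin n × Bool) (p : Fin m × Fin 3) : ℕ :=
  if (φ p.1 p.2).2 then
    varStartR m n φ (φ p.1 p.2).1 + 3 + 2 * litRank m n φ p
  else
    varStartR m n φ (φ p.1 p.2).1 + 4 + 2 * posOcc m n φ (φ p.1 p.2).1 + 2 * litRank m n φ p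

/-- Valued sets of the instance `R` built from `φ` (with `4m` clause items followed by the
Variable-Gadgets, `10m + 5n` items in total): clause agent `C_i^k` values the 4 items of the
Clause-Gadget of `C_i` and its 2 items inside the Variable-Gadget of its literal's variable;
`X_j` values the items at offsets `0, 1, 2, 3 + 2·posOcc` of the Variable-Gadget of `x_j`,
and `X̄_j` those at offsets `0, 1, 3 + 2·posOcc, 4 + 2·occCount`. -/
def RV (m n : ℕ) (φ : Fin m → Fin 3 → Fin n × Bool) :
    RAgent m n → Finset (Fin (10 * m + 5 * n))
  | .inl p => Finset.univ.filter fun t =>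
      (4 * p.1.val ≤ t.val ∧ t.val < 4 * p.1.val + 4) ∨
      t.val = pairStart m n φ p ∨ t.val = pairStart m n φ p + 1
  | .inr (j, true) => Finset.univ.filter fun t =>
      t.val = varStartR m n φ j ∨ t.val = varStartR m n φ j + 1 ∨
      t.val = varStartR m n φ j + 2 ∨
      t.val = varStartR m n φ j + 3 + 2 * posOcc m n φ j
  | .inr (j, false) => Finset.univ.filter fun t =>
      t.val = varStartR m n φ j ∨ t.val = varStartR m n φ j + 1 ∨
      t.val = varStartR m n φ j + 3 + 2 * posOcc m n φ j ∨
      t.val = varStartR m n φ j + 4 + 2 * occCount m n φ j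

/-!
In a good partial allocation, a clause agent cannot own items both in her Clause-Gadget and
in a Variable-Gadget, since her block would swallow the first three items of that gadget, one
of which `X_j` must own. As the three agents of a clause cannot each own two of its four gadget
items, some agent `C_i^k` owns both of her Variable-Gadget items. These pairs are consistent:
if a pair for `x_j` is owned, `X_j` is confined to her first three items and so owns the second
one; if moreover a pair for `¬x_j` is owned, `X̄_j` has no two valued items left that she can
reach. Setting `x_j` true exactly when some pair of a positive occurrence of `x_j` is owned
therefore satisfies every clause.
-/

open Finset

section Allocation

variable {α : Type*}

lemma Finset.exists_lt_of_two_le_card_filter {ι : Type*} [LinearOrder ι] {s : Finset ι}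
    {P : ι → Prop} [DecidablePred P] (h : 2 ≤ #(s.filter P)) :
    ∃ x y, x < y ∧ x ∈ s ∧ y ∈ s ∧ P x ∧ P y := by
  obtain ⟨a, ha, b, hb, hab⟩ := one_lt_card.1 h
  rw [mem_filter] at ha hb
  rcases hab.lt_or_gt with hlt | hlt
  · exact ⟨a, b, hlt, ha.1, hb.1, ha.2, hb.2⟩
  · exact ⟨b, a, hlt, hb.1, ha.1, hb.2, ha.2⟩

lemma Finset.sum_card_filter_eq_le {ι κ : Type*} [Fintype κ] [DecidableEq α] (s : Finset ι)
    (f : ι → α) {g : κ → α} (hg : Function.Injective g) :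
    ∑ k, #{t ∈ s | f t = g k} ≤ #s := by
  classical
  calc ∑ k, #{t ∈ s | f t = g k} = ∑ b ∈ univ.image g, #{t ∈ s | f t = b} :=
        (sum_image (f := fun b => #{t ∈ s | f t = b}) fun k _ l _ hkl => hg hkl).symm
    _ = #{t ∈ s | f t ∈ univ.image g} := sum_card_fiberwise_eq_card_filter _ _ _
    _ ≤ #s := card_filter_le _ _

-- Reading the allocation on `ℕ` spares every item index its bound proof.
def extendByNone {N : ℕ} (owner : Fin N → Option α) (t : ℕ) : Option α :=
  if h : t < N then owner ⟨t, h⟩ else none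

@[simp]
lemma extendByNone_val {N : ℕ} (owner : Fin N → Option α) (t : Fin N) :
    extendByNone owner t = owner t :=
  dif_pos t.isLt

lemma ordConnected_preimage_extendByNone {N : ℕ} {owner : Fin N → Option α}
    (h : ∀ (a : α) (t₁ t₂ t₃ : Fin N),
      t₁ ≤ t₂ → t₂ ≤ t₃ → owner t₁ = some a → owner t₃ = some a → owner t₂ = some a)
    (a : α) : (extendByNone owner ⁻¹' {some a}).OrdConnected := by
  refine ⟨fun x hx z hz y hy => ?_⟩
  simp only [Set.mem_preimage, Set.mem_singleton_iff, extendByNone] at hx hz ⊢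
  split_ifs at hx hz with hxN hzN
  rw [dif_pos (hy.2.trans_lt hzN)]
  exact h a _ _ _ hy.1 hy.2 hx hz

lemma eq_of_ordConnected_preimage {own : ℕ → Option α}
    (hc : ∀ a, (own ⁻¹' {some a}).OrdConnected) {a b : α} {x y z : ℕ}
    (hx : own x = some a) (hz : own z = some a) (hxy : x ≤ y) (hyz : y ≤ z)
    (hy : own y = some b) : b = a := by
  have : own y = some a := (hc a).out hx hz ⟨hxy, hyz⟩
  simpa [hy] using this

end Allocation

section Layout

variable {m n : ℕ} (φ : Fin m → Fin 3 → Fin n × Bool)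

lemma four_mul_le_varStartR (j : Fin n) : 4 * m ≤ varStartR m n φ j :=
  Nat.le_add_right _ _

lemma varStartR_add_three_le_pairStart (p : Fin m × Fin 3) :
    varStartR m n φ (φ p.1 p.2).1 + 3 ≤ pairStart m n φ p := by
  unfold pairStart
  split_ifs <;> omega

lemma litRank_lt_card (p : Fin m × Fin 3) :
    litRank m n φ p < #{p' : Fin m × Fin 3 | φ p'.1 p'.2 = φ p.1 p.2} := by
  unfold litRank
  rw [← filter_filter]
  exact card_lt_card (filter_ssubset.2 ⟨p, by simp, lt_irrefl _⟩)

lemma posOcc_add_card_neg (j : Fin n) :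
    posOcc m n φ j + #{p : Fin m × Fin 3 | φ p.1 p.2 = (j, false)} = occCount m n φ j := by
  unfold posOcc occCount
  rw [← card_filter_add_card_filter_not (s := {p : Fin m × Fin 3 | (φ p.1 p.2).1 = j})
    (fun p => (φ p.1 p.2).2 = true), filter_filter, filter_filter]
  congr 3 <;> ext p <;> cases φ p.1 p.2 <;> simp [Prod.ext_iff]

variable {φ}

lemma pairStart_add_one_lt_of_pos {p : Fin m × Fin 3} {j : Fin n} (h : φ p.1 p.2 = (j, true)) :
    pairStart m n φ p + 1 < varStartR m n φ j + 3 + 2 * posOcc m n φ j := by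
  have hrank := litRank_lt_card φ p
  rw [h] at hrank
  simp only [pairStart, h, if_true]
  unfold posOcc
  omega

lemma pairStart_bounds_of_neg {p : Fin m × Fin 3} {j : Fin n} (h : φ p.1 p.2 = (j, false)) :
    varStartR m n φ j + 3 + 2 * posOcc m n φ j < pairStart m n φ p ∧
      pairStart m n φ p + 1 < varStartR m n φ j + 4 + 2 * occCount m n φ j := by
  have hrank := litRank_lt_card φ p
  rw [h] at hrank
  have hocc := posOcc_add_card_neg φ j
  simp only [pairStart, h, Bool.false_eq_true, if_false]
  omega

end Layout

section Reduction

variable {m n : ℕ} (φ : Fin m → Fin 3 → Fin n × Bool) (own : ℕ → Option (RAgent m n))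

def OwnsTwoValued (a : RAgent m n) : Prop :=
  ∃ x y : Fin (10 * m + 5 * n), x < y ∧ x ∈ RV m n φ a ∧ y ∈ RV m n φ a ∧
    own x = some a ∧ own y = some a

def OwnsPair (p : Fin m × Fin 3) : Prop :=
  own (pairStart m n φ p) = some (.inl p) ∧ own (pairStart m n φ p + 1) = some (.inl p)

variable {φ own}

lemma exists_owned_varGadget_head (hval : ∀ a, OwnsTwoValued φ own a) (j : Fin n) :
    ∃ t, varStartR m n φ j ≤ t ∧ t ≤ varStartR m n φ j + 2 ∧ own t = some (.inr (j, true)) := by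
  obtain ⟨x, y, hxy, hx, hy, hox, -⟩ := hval (.inr (j, true))
  simp only [RV, mem_filter, mem_univ, true_and] at hx hy
  exact ⟨x, by omega, by omega, hox⟩

lemma ownsPair_or_two_le_card_clauseGadget (hc : ∀ a, (own ⁻¹' {some a}).OrdConnected)
    (hval : ∀ a, OwnsTwoValued φ own a) (p : Fin m × Fin 3) :
    OwnsPair φ own p ∨ 2 ≤ #{t ∈ Ico (4 * p.1.val) (4 * p.1.val + 4) | own t = some (.inl p)} := by
  obtain ⟨x, y, hxy, hx, hy, hox, hoy⟩ := hval (.inl p)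
  obtain ⟨t, hvt, htv, hot⟩ := exists_owned_varGadget_head hval (φ p.1 p.2).1
  have := four_mul_le_varStartR φ (φ p.1 p.2).1
  have := varStartR_add_three_le_pairStart φ p
  have := p.1.isLt
  simp only [RV, mem_filter, mem_univ, true_and] at hx hy
  have hxy' : x.val < y.val := hxy
  by_cases hyc : y.val < 4 * p.1.val + 4
  · exact .inr (one_lt_card.2 ⟨x, mem_filter.2 ⟨mem_Ico.2 ⟨by omega, by omega⟩, hox⟩,
      y, mem_filter.2 ⟨mem_Ico.2 ⟨by omega, by omega⟩, hoy⟩, by omega⟩)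
  by_cases hxc : x.val < 4 * p.1.val + 4
  · nomatch eq_of_ordConnected_preimage hc hox hoy (by omega) (by omega) hot
  have hx' : x.val = pairStart m n φ p := by omega
  have hy' : y.val = pairStart m n φ p + 1 := by omega
  exact .inl ⟨hx' ▸ hox, hy' ▸ hoy⟩

lemma exists_ownsPair (hc : ∀ a, (own ⁻¹' {some a}).OrdConnected)
    (hval : ∀ a, OwnsTwoValued φ own a) (i : Fin m) : ∃ k, OwnsPair φ own (i, k) := by
  by_contra! h
  have htwo k := (ownsPair_or_two_le_card_clauseGadget hc hval (i, k)).resolve_left (h k)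
  have hsum := sum_card_filter_eq_le (Ico (4 * i.val) (4 * i.val + 4)) own
    (g := fun k : Fin 3 => some (.inl (i, k))) fun k l hkl => by simpa using hkl
  simp only [Fin.sum_univ_three, Nat.card_Ico] at hsum htwo
  have := htwo 0
  have := htwo 1
  have := htwo 2
  omega

lemma own_varStartR_add_one_of_ownsPair_pos (hc : ∀ a, (own ⁻¹' {some a}).OrdConnected)
    (hval : ∀ a, OwnsTwoValued φ own a) {p : Fin m × Fin 3} {j : Fin n}
    (hpj : φ p.1 p.2 = (j, true)) (hp : OwnsPair φ own p) :
    own (varStartR m n φ j + 1) = some (.inr (j, true)) := by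
  obtain ⟨x, y, hxy, hx, hy, hox, hoy⟩ := hval (.inr (j, true))
  simp only [RV, mem_filter, mem_univ, true_and] at hx hy
  have hxy' : x.val < y.val := hxy
  have := pairStart_add_one_lt_of_pos hpj
  have := varStartR_add_three_le_pairStart φ p
  simp only [hpj] at this
  by_cases hyv : y.val ≤ varStartR m n φ j + 2
  · exact (hc _).out hox hoy ⟨by omega, by omega⟩
  · nomatch eq_of_ordConnected_preimage hc hox hoy (by omega) (by omega) hp.1

lemma not_ownsPair_pos_and_neg (hc : ∀ a, (own ⁻¹' {some a}).OrdConnected)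
    (hval : ∀ a, OwnsTwoValued φ own a) {p q : Fin m × Fin 3} {j : Fin n}
    (hpj : φ p.1 p.2 = (j, true)) (hqj : φ q.1 q.2 = (j, false))
    (hp : OwnsPair φ own p) (hq : OwnsPair φ own q) : False := by
  have hX := own_varStartR_add_one_of_ownsPair_pos hc hval hpj hp
  obtain ⟨x, y, hxy, hx, hy, hox, hoy⟩ := hval (.inr (j, false))
  simp only [RV, mem_filter, mem_univ, true_and] at hx hy
  have hxy' : x.val < y.val := hxy
  have := pairStart_bounds_of_neg hqj
  by_cases hxv : x.val ≤ varStartR m n φ j + 1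
  · nomatch eq_of_ordConnected_preimage hc hox hoy hxv (by omega) hX
  · nomatch eq_of_ordConnected_preimage hc hox hoy (by omega) (by omega) hq.1

end Reduction

open Classical in
theorem satisfiable_of_partial_allocation_general
    (m n : ℕ)
    (φ : Fin m → Fin 3 → Fin n × Bool)
    (powner : Fin (10 * m + 5 * n) → Option (RAgent m n))
    (hcontig : ∀ (a : RAgent m n) (t₁ t₂ t₃ : Fin (10 * m + 5 * n)),
      t₁ ≤ t₂ → t₂ ≤ t₃ → powner t₁ = some a → powner t₃ = some a → powner t₂ = some a)
    (hval : ∀ a : RAgent m n,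
      2 ≤ ((RV m n φ a).filter fun t => powner t = some a).card) :
    SatFormula m n φ := by
  set own := extendByNone powner
  have hc := ordConnected_preimage_extendByNone hcontig
  have hval' (a : RAgent m n) : OwnsTwoValued φ own a := by
    obtain ⟨x, y, hxy, hx, hy, hox, hoy⟩ := exists_lt_of_two_le_card_filter (hval a)
    exact ⟨x, y, hxy, hx, hy, by simpa [own] using hox, by simpa [own] using hoy⟩
  choose k hk using exists_ownsPair hc hval'
  refine ⟨fun j => decide (∃ p, φ p.1 p.2 = (j, true) ∧ OwnsPair φ own p), fun i => ⟨k i, ?_⟩⟩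
  cases hb : (φ i (k i)).2
  · simp only [decide_eq_false_iff_not, not_exists, not_and]
    exact fun p hp hop => not_ownsPair_pos_and_neg hc hval' hp (Prod.ext rfl hb) hop (hk i)
  · exact decide_eq_true ⟨(i, k i), Prod.ext rfl hb, hk i⟩

open Classical in
/-- If the discrete instance `R` built from the 3-SAT formula `φ` admits
a partial contiguous allocation (pairwise disjoint sets of consecutive items, one per agent,
not necessarily covering all items) in which every agent receives at least two items she
values, then `φ` is satisfiable. -/
theorem satisfiable_of_partial_allocation
    (m n : ℕ) (hm : 0 < m) (hn : 0 < n)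
    (φ : Fin m → Fin 3 → Fin n × Bool)
    (powner : Fin (10 * m + 5 * n) → Option (RAgent m n))
    (hcontig : ∀ (a : RAgent m n) (t₁ t₂ t₃ : Fin (10 * m + 5 * n)),
      t₁ ≤ t₂ → t₂ ≤ t₃ → powner t₁ = some a → powner t₃ = some a → powner t₂ = some a)
    (hval : ∀ a : RAgent m n,
      2 ≤ ((RV m n φ a).filter fun t => powner t = some a).card) :
    SatFormula m n φ :=
  satisfiable_of_partial_allocation_general m n φ powner hcontig hval
end
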